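/- arXiv:2507.14576 — 3 statements merged into one kernel-verified Lean document; each statement's English description precedes it below -/
import Mathlib

section
/- Assume ρ₀ ≠ 0 and that S(x,t) ∩ supp ρ₀ is nonempty for every x ∈ ℝ and t > 0. Define q(x,t) = ∫_{(−∞, y_*(x,t))} (u₀(η)·e^{−t/τ} + m̃₀(η)·(τe^{−t/τ} − τ)) dρ₀(η) if ν(x,t) = F(y_*(x,t);x,t), and the same integral over (−∞, y_*(x,t)] otherwise. Then for every x ∈ ℝ and all 0 < t₁ ≤ t₂: ∫_{t₁}^{t₂} q(x,t) dt = ν(x,t₂) − ν(x,t₁). -/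
open MeasureTheory Set Filter Topology

noncomputable def Mtot (ρ : Measure ℝ) : ℝ := (ρ Set.univ).toReal

noncomputable def m0 (ρ : Measure ℝ) (y : ℝ) : ℝ := (ρ (Set.Iio y)).toReal

noncomputable def m0p (ρ : Measure ℝ) (y : ℝ) : ℝ := (ρ (Set.Iic y)).toReal

/-- `m̃₀(y) = (1/2)(ρ((−∞,y)) + ρ((−∞,y]) − M)`. -/
noncomputable def mtilde (ρ : Measure ℝ) (y : ℝ) : ℝ :=
  (m0 ρ y + m0p ρ y - Mtot ρ) / 2

/-- topological support of the measure. -/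
def msupp (ρ : Measure ℝ) : Set ℝ := {x | ∀ U ∈ nhds x, 0 < ρ U}

/-- The generalized potential `F(y;x,t)`. -/
noncomputable def Fpot (ρ : Measure ℝ) (u₀ : ℝ → ℝ) (τ y x t : ℝ) : ℝ :=
  ∫ η in Set.Iio y,
    (η + u₀ η * (τ * (1 - Real.exp (-t / τ)))
       + mtilde ρ η * (τ ^ 2 - τ ^ 2 * Real.exp (-t / τ) - τ * t) - x) ∂ρ

/-- The right-limit value `F(y+;x,t)` (integral over `(−∞,y]`). -/
noncomputable def FpotP (ρ : Measure ℝ) (u₀ : ℝ → ℝ) (τ y x t : ℝ) : ℝ :=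
  ∫ η in Set.Iic y,
    (η + u₀ η * (τ * (1 - Real.exp (-t / τ)))
       + mtilde ρ η * (τ ^ 2 - τ ^ 2 * Real.exp (-t / τ) - τ * t) - x) ∂ρ

/-- `ν(x,t) = inf_y F(y;x,t)`. -/
noncomputable def nuEP (ρ : Measure ℝ) (u₀ : ℝ → ℝ) (τ x t : ℝ) : ℝ :=
  ⨅ y : ℝ, Fpot ρ u₀ τ y x t

/-- `S(x,t)`: points approachable by sequences along which `F` tends to `ν(x,t)`. -/
def Sset (ρ : Measure ℝ) (u₀ : ℝ → ℝ) (τ x t : ℝ) : Set ℝ :=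
  {y | ∃ yn : ℕ → ℝ, Tendsto yn atTop (𝓝 y) ∧
    Tendsto (fun n => Fpot ρ u₀ τ (yn n) x t) atTop (𝓝 (nuEP ρ u₀ τ x t))}

/-- `y_*(x,t) = inf (S(x,t) ∩ supp ρ₀)`. -/
noncomputable def ystar (ρ : Measure ℝ) (u₀ : ℝ → ℝ) (τ x t : ℝ) : ℝ :=
  sInf (Sset ρ u₀ τ x t ∩ msupp ρ)

/-- initial speed `c(y;x,t)` of the characteristic connecting `(y,0)` and `(x,t)`. -/
noncomputable def cspeed (ρ : Measure ℝ) (τ y x t : ℝ) : ℝ :=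
  (x - y) / (τ * (1 - Real.exp (-t / τ)))
    - mtilde ρ y * (τ - t / (1 - Real.exp (-t / τ)))

/-- The momentum `q(x,t)`. -/
noncomputable def qmom (ρ : Measure ℝ) (u₀ : ℝ → ℝ) (τ x t : ℝ) : ℝ :=
  if nuEP ρ u₀ τ x t = Fpot ρ u₀ τ (ystar ρ u₀ τ x t) x t then
    ∫ η in Set.Iio (ystar ρ u₀ τ x t),
      (u₀ η * Real.exp (-t / τ) + mtilde ρ η * (τ * Real.exp (-t / τ) - τ)) ∂ρ
  else
    ∫ η in Set.Iic (ystar ρ u₀ τ x t),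
      (u₀ η * Real.exp (-t / τ) + mtilde ρ η * (τ * Real.exp (-t / τ) - τ)) ∂ρ

namespace S13

lemma m0_mono (ρ : Measure ℝ) [IsFiniteMeasure ρ] : Monotone (m0 ρ) := fun _ _ hab =>
  (ENNReal.toReal_le_toReal (measure_ne_top _ _) (measure_ne_top _ _)).2
    (measure_mono (Iio_subset_Iio hab))

lemma m0p_mono (ρ : Measure ℝ) [IsFiniteMeasure ρ] : Monotone (m0p ρ) := fun _ _ hab =>
  (ENNReal.toReal_le_toReal (measure_ne_top _ _) (measure_ne_top _ _)).2
    (measure_mono (Iic_subset_Iic.2 hab))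

lemma measurable_mtilde (ρ : Measure ℝ) [IsFiniteMeasure ρ] : Measurable (mtilde ρ) := by
  unfold mtilde
  exact (((m0_mono ρ).measurable.add (m0p_mono ρ).measurable).sub measurable_const).div_const 2

lemma abs_mtilde_le (ρ : Measure ℝ) [IsFiniteMeasure ρ] (y : ℝ) : |mtilde ρ y| ≤ Mtot ρ := by
  have h0 : (0:ℝ) ≤ Mtot ρ := ENNReal.toReal_nonneg
  have h1 : 0 ≤ m0 ρ y := ENNReal.toReal_nonneg
  have h2 : 0 ≤ m0p ρ y := ENNReal.toReal_nonneg
  have h3 : m0 ρ y ≤ Mtot ρ :=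
    (ENNReal.toReal_le_toReal (measure_ne_top _ _) (measure_ne_top _ _)).2
      (measure_mono (subset_univ _))
  have h4 : m0p ρ y ≤ Mtot ρ :=
    (ENNReal.toReal_le_toReal (measure_ne_top _ _) (measure_ne_top _ _)).2
      (measure_mono (subset_univ _))
  rw [abs_le]
  unfold mtilde
  constructor <;> linarith

lemma integrable_of_bound (ρ : Measure ℝ) [IsFiniteMeasure ρ] (f : ℝ → ℝ) (C : ℝ)
    (hf : AEStronglyMeasurable f ρ) (h : ∀ᵐ η ∂ρ, |f η| ≤ C) : Integrable f ρ :=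
  Integrable.mono' (integrable_const C) hf (by simpa [Real.norm_eq_abs] using h)

lemma integrable_u0 (ρ : Measure ℝ) [IsFiniteMeasure ρ] (u₀ : ℝ → ℝ) (U₀ : ℝ)
    (humeas : Measurable u₀) (hu : ∀ᵐ η ∂ρ, |u₀ η| ≤ U₀) : Integrable u₀ ρ :=
  integrable_of_bound ρ u₀ U₀ humeas.aestronglyMeasurable hu

lemma integrable_mtilde (ρ : Measure ℝ) [IsFiniteMeasure ρ] : Integrable (mtilde ρ) ρ :=
  integrable_of_bound ρ _ (Mtot ρ) (measurable_mtilde ρ).aestronglyMeasurable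
    (ae_of_all _ (abs_mtilde_le ρ))

noncomputable def psi (ρ : Measure ℝ) (u₀ : ℝ → ℝ) (τ x t η : ℝ) : ℝ :=
  η + u₀ η * (τ * (1 - Real.exp (-t / τ)))
    + mtilde ρ η * (τ ^ 2 - τ ^ 2 * Real.exp (-t / τ) - τ * t) - x

lemma Fpot_eq_psi (ρ : Measure ℝ) (u₀ : ℝ → ℝ) (τ y x t : ℝ) :
    Fpot ρ u₀ τ y x t = ∫ η in Iio y, psi ρ u₀ τ x t η ∂ρ := rfl

lemma FpotP_eq_psi (ρ : Measure ℝ) (u₀ : ℝ → ℝ) (τ y x t : ℝ) :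
    FpotP ρ u₀ τ y x t = ∫ η in Iic y, psi ρ u₀ τ x t η ∂ρ := rfl

lemma measurable_psi (ρ : Measure ℝ) [IsFiniteMeasure ρ] (u₀ : ℝ → ℝ) (τ x t : ℝ)
    (humeas : Measurable u₀) : Measurable (psi ρ u₀ τ x t) := by
  unfold psi
  exact ((measurable_id.add (humeas.mul_const _)).add
    ((measurable_mtilde ρ).mul_const _)).sub measurable_const

lemma integrable_psi (ρ : Measure ℝ) [IsFiniteMeasure ρ] (u₀ : ℝ → ℝ) (U₀ τ x t : ℝ)
    (hmom : Integrable (fun η : ℝ => η) ρ) (humeas : Measurable u₀)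
    (hu : ∀ᵐ η ∂ρ, |u₀ η| ≤ U₀) : Integrable (psi ρ u₀ τ x t) ρ := by
  have h : Integrable (fun η => (η - x) + (u₀ η * (τ * (1 - Real.exp (-t / τ)))
      + mtilde ρ η * (τ ^ 2 - τ ^ 2 * Real.exp (-t / τ) - τ * t))) ρ :=
    (hmom.sub (integrable_const x)).add
      (((integrable_u0 ρ u₀ U₀ humeas hu).mul_const _).add
        ((integrable_mtilde ρ).mul_const _))
  exact h.congr (ae_of_all _ fun η => by unfold psi; ring)

noncomputable def AA (ρ : Measure ℝ) (x y : ℝ) : ℝ := ∫ η in Iio y, (η - x) ∂ρ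
noncomputable def BB (ρ : Measure ℝ) (u₀ : ℝ → ℝ) (y : ℝ) : ℝ := ∫ η in Iio y, u₀ η ∂ρ
noncomputable def CC (ρ : Measure ℝ) (y : ℝ) : ℝ := ∫ η in Iio y, mtilde ρ η ∂ρ
noncomputable def AAp (ρ : Measure ℝ) (x y : ℝ) : ℝ := ∫ η in Iic y, (η - x) ∂ρ
noncomputable def BBp (ρ : Measure ℝ) (u₀ : ℝ → ℝ) (y : ℝ) : ℝ := ∫ η in Iic y, u₀ η ∂ρ
noncomputable def CCp (ρ : Measure ℝ) (y : ℝ) : ℝ := ∫ η in Iic y, mtilde ρ η ∂ρ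

lemma setint_decomp (ρ : Measure ℝ) [IsFiniteMeasure ρ] (u₀ : ℝ → ℝ) (U₀ x : ℝ)
    (hmom : Integrable (fun η : ℝ => η) ρ) (humeas : Measurable u₀)
    (hu : ∀ᵐ η ∂ρ, |u₀ η| ≤ U₀) (s : Set ℝ) (c₁ c₂ : ℝ) :
    ∫ η in s, (η + u₀ η * c₁ + mtilde ρ η * c₂ - x) ∂ρ
      = (∫ η in s, (η - x) ∂ρ) + (∫ η in s, u₀ η ∂ρ) * c₁
        + (∫ η in s, mtilde ρ η ∂ρ) * c₂ := by
  have h1 : IntegrableOn (fun η => η - x) s ρ := (hmom.sub (integrable_const x)).integrableOn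
  have h2 : IntegrableOn (fun η => u₀ η * c₁) s ρ :=
    ((integrable_u0 ρ u₀ U₀ humeas hu).mul_const _).integrableOn
  have h3 : IntegrableOn (fun η => mtilde ρ η * c₂) s ρ :=
    ((integrable_mtilde ρ).mul_const _).integrableOn
  have h12 : IntegrableOn (fun η => η - x + u₀ η * c₁) s ρ := h1.add h2
  rw [← integral_mul_const, ← integral_mul_const, ← integral_add h1 h2,
    ← integral_add h12 h3]
  exact integral_congr_ae (ae_of_all _ fun η => by ring)

lemma Fpot_eq (ρ : Measure ℝ) [IsFiniteMeasure ρ] (u₀ : ℝ → ℝ) (U₀ τ y x t : ℝ)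
    (hmom : Integrable (fun η : ℝ => η) ρ) (humeas : Measurable u₀)
    (hu : ∀ᵐ η ∂ρ, |u₀ η| ≤ U₀) :
    Fpot ρ u₀ τ y x t = AA ρ x y + BB ρ u₀ y * (τ * (1 - Real.exp (-t / τ)))
      + CC ρ y * (τ ^ 2 - τ ^ 2 * Real.exp (-t / τ) - τ * t) :=
  setint_decomp ρ u₀ U₀ x hmom humeas hu (Iio y) _ _

lemma FpotP_eq (ρ : Measure ℝ) [IsFiniteMeasure ρ] (u₀ : ℝ → ℝ) (U₀ τ y x t : ℝ)
    (hmom : Integrable (fun η : ℝ => η) ρ) (humeas : Measurable u₀)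
    (hu : ∀ᵐ η ∂ρ, |u₀ η| ≤ U₀) :
    FpotP ρ u₀ τ y x t = AAp ρ x y + BBp ρ u₀ y * (τ * (1 - Real.exp (-t / τ)))
      + CCp ρ y * (τ ^ 2 - τ ^ 2 * Real.exp (-t / τ) - τ * t) :=
  setint_decomp ρ u₀ U₀ x hmom humeas hu (Iic y) _ _

lemma qint (ρ : Measure ℝ) [IsFiniteMeasure ρ] (u₀ : ℝ → ℝ) (U₀ : ℝ)
    (humeas : Measurable u₀) (hu : ∀ᵐ η ∂ρ, |u₀ η| ≤ U₀) (s : Set ℝ) (c₁ c₂ : ℝ) :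
    ∫ η in s, (u₀ η * c₁ + mtilde ρ η * c₂) ∂ρ
      = (∫ η in s, u₀ η ∂ρ) * c₁ + (∫ η in s, mtilde ρ η ∂ρ) * c₂ := by
  have h2 : IntegrableOn (fun η => u₀ η * c₁) s ρ :=
    ((integrable_u0 ρ u₀ U₀ humeas hu).mul_const _).integrableOn
  have h3 : IntegrableOn (fun η => mtilde ρ η * c₂) s ρ :=
    ((integrable_mtilde ρ).mul_const _).integrableOn
  rw [← integral_mul_const, ← integral_mul_const, integral_add h2 h3]

lemma abs_setIntegral_le (ρ : Measure ℝ) (f : ℝ → ℝ) (hf : Integrable f ρ) (s : Set ℝ) :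
    |∫ η in s, f η ∂ρ| ≤ ∫ η, |f η| ∂ρ := by
  calc |∫ η in s, f η ∂ρ| ≤ ∫ η in s, |f η| ∂ρ := by
        simpa [Real.norm_eq_abs] using norm_integral_le_integral_norm (μ := ρ.restrict s) f
    _ ≤ ∫ η, |f η| ∂ρ :=
        setIntegral_le_integral hf.abs (ae_of_all _ fun η => abs_nonneg _)

end S13

namespace S13

variable {ρ : Measure ℝ} [IsFiniteMeasure ρ] {u₀ : ℝ → ℝ} {U₀ τ x t : ℝ}

lemma tendsto_Fpot_left
    (hmom : Integrable (fun η : ℝ => η) ρ) (humeas : Measurable u₀)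
    (hu : ∀ᵐ η ∂ρ, |u₀ η| ≤ U₀) (y : ℝ) (z : ℕ → ℝ)
    (hz : Tendsto z atTop (𝓝 y)) (hle : ∀ n, z n ≤ y) :
    Tendsto (fun n => Fpot ρ u₀ τ (z n) x t) atTop (𝓝 (Fpot ρ u₀ τ y x t)) := by
  have hint := integrable_psi ρ u₀ U₀ τ x t hmom humeas hu
  have hms := measurable_psi ρ u₀ τ x t humeas
  have key : ∀ w, Fpot ρ u₀ τ w x t = ∫ η, (Iio w).indicator (psi ρ u₀ τ x t) η ∂ρ :=
    fun w => (integral_indicator measurableSet_Iio).symm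
  simp_rw [key]
  apply tendsto_integral_of_dominated_convergence (fun η => |psi ρ u₀ τ x t η|)
  · intro n; exact (hms.indicator measurableSet_Iio).aestronglyMeasurable
  · exact hint.abs
  · intro n
    exact ae_of_all _ fun η => by
      simpa [Real.norm_eq_abs] using norm_indicator_le_norm_self (psi ρ u₀ τ x t) η
  · refine ae_of_all _ fun η => ?_
    by_cases hη : η < y
    · have hev : ∀ᶠ n in atTop, (Iio (z n)).indicator (psi ρ u₀ τ x t) η
          = (Iio y).indicator (psi ρ u₀ τ x t) η := by
        filter_upwards [hz.eventually (eventually_gt_nhds hη)] with n hn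
        rw [indicator_of_mem (mem_Iio.2 hn), indicator_of_mem (mem_Iio.2 hη)]
      exact Tendsto.congr' (hev.mono fun _ h => h.symm) tendsto_const_nhds
    · have hev : ∀ n, (Iio (z n)).indicator (psi ρ u₀ τ x t) η
          = (Iio y).indicator (psi ρ u₀ τ x t) η := by
        intro n
        rw [indicator_of_notMem (by simpa using (hle n).trans (not_lt.1 hη)),
          indicator_of_notMem (by simpa using (not_lt.1 hη))]
      exact Tendsto.congr (fun n => (hev n).symm) tendsto_const_nhds

lemma tendsto_Fpot_right
    (hmom : Integrable (fun η : ℝ => η) ρ) (humeas : Measurable u₀)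
    (hu : ∀ᵐ η ∂ρ, |u₀ η| ≤ U₀) (y : ℝ) (z : ℕ → ℝ)
    (hz : Tendsto z atTop (𝓝 y)) (hgt : ∀ n, y < z n) :
    Tendsto (fun n => Fpot ρ u₀ τ (z n) x t) atTop (𝓝 (FpotP ρ u₀ τ y x t)) := by
  have hint := integrable_psi ρ u₀ U₀ τ x t hmom humeas hu
  have hms := measurable_psi ρ u₀ τ x t humeas
  have key : ∀ w, Fpot ρ u₀ τ w x t = ∫ η, (Iio w).indicator (psi ρ u₀ τ x t) η ∂ρ :=
    fun w => (integral_indicator measurableSet_Iio).symm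
  have keyP : FpotP ρ u₀ τ y x t = ∫ η, (Iic y).indicator (psi ρ u₀ τ x t) η ∂ρ :=
    (integral_indicator measurableSet_Iic).symm
  simp_rw [key, keyP]
  apply tendsto_integral_of_dominated_convergence (fun η => |psi ρ u₀ τ x t η|)
  · intro n; exact (hms.indicator measurableSet_Iio).aestronglyMeasurable
  · exact hint.abs
  · intro n
    exact ae_of_all _ fun η => by
      simpa [Real.norm_eq_abs] using norm_indicator_le_norm_self (psi ρ u₀ τ x t) η
  · refine ae_of_all _ fun η => ?_
    by_cases hη : η ≤ y
    · have hev : ∀ n, (Iio (z n)).indicator (psi ρ u₀ τ x t) η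
          = (Iic y).indicator (psi ρ u₀ τ x t) η := by
        intro n
        rw [indicator_of_mem (mem_Iio.2 (lt_of_le_of_lt hη (hgt n))),
          indicator_of_mem (mem_Iic.2 hη)]
      exact Tendsto.congr (fun n => (hev n).symm) tendsto_const_nhds
    · have hev : ∀ᶠ n in atTop, (Iio (z n)).indicator (psi ρ u₀ τ x t) η
          = (Iic y).indicator (psi ρ u₀ τ x t) η := by
        filter_upwards [hz.eventually (eventually_lt_nhds (not_le.1 hη))] with n hn
        rw [indicator_of_notMem (by simpa using hn.le),
          indicator_of_notMem (by simpa using (not_le.1 hη))]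
      exact Tendsto.congr' (hev.mono fun _ h => h.symm) tendsto_const_nhds

lemma bddBelow_Fpot
    (hmom : Integrable (fun η : ℝ => η) ρ) (humeas : Measurable u₀)
    (hu : ∀ᵐ η ∂ρ, |u₀ η| ≤ U₀) :
    BddBelow (range fun y => Fpot ρ u₀ τ y x t) := by
  refine ⟨-∫ η, |psi ρ u₀ τ x t η| ∂ρ, ?_⟩
  rintro _ ⟨y, rfl⟩
  have h := abs_setIntegral_le ρ _ (integrable_psi ρ u₀ U₀ τ x t hmom humeas hu) (Iio y)
  rw [← Fpot_eq_psi] at h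
  linarith [(abs_le.1 h).1]

lemma nuEP_le
    (hmom : Integrable (fun η : ℝ => η) ρ) (humeas : Measurable u₀)
    (hu : ∀ᵐ η ∂ρ, |u₀ η| ≤ U₀) (y : ℝ) :
    nuEP ρ u₀ τ x t ≤ Fpot ρ u₀ τ y x t :=
  ciInf_le (bddBelow_Fpot hmom humeas hu) y

lemma nuEP_le_FpotP
    (hmom : Integrable (fun η : ℝ => η) ρ) (humeas : Measurable u₀)
    (hu : ∀ᵐ η ∂ρ, |u₀ η| ≤ U₀) (y : ℝ) :
    nuEP ρ u₀ τ x t ≤ FpotP ρ u₀ τ y x t := by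
  have hz : Tendsto (fun n : ℕ => y + 1/((n:ℝ)+1)) atTop (𝓝 y) := by
    have := tendsto_const_nhds (x := y) (f := atTop (α := ℕ)) |>.add
      tendsto_one_div_add_atTop_nhds_zero_nat
    simpa using this
  have h := tendsto_Fpot_right (τ := τ) (x := x) (t := t) hmom humeas hu y _ hz
    (fun n => lt_add_of_pos_right y (by positivity))
  exact ge_of_tendsto' h (fun n => nuEP_le hmom humeas hu _)

lemma S_value
    (hmom : Integrable (fun η : ℝ => η) ρ) (humeas : Measurable u₀)
    (hu : ∀ᵐ η ∂ρ, |u₀ η| ≤ U₀) (y : ℝ) (hy : y ∈ Sset ρ u₀ τ x t) :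
    nuEP ρ u₀ τ x t = Fpot ρ u₀ τ y x t ∨ nuEP ρ u₀ τ x t = FpotP ρ u₀ τ y x t := by
  obtain ⟨yn, hyn, hFn⟩ := hy
  by_cases hfreq : ∃ᶠ n in atTop, yn n ≤ y
  · left
    obtain ⟨φ, hφ, hle⟩ := Filter.extraction_of_frequently_atTop hfreq
    exact tendsto_nhds_unique (hFn.comp hφ.tendsto_atTop)
      (tendsto_Fpot_left hmom humeas hu y (yn ∘ φ) (hyn.comp hφ.tendsto_atTop) hle)
  · right
    rw [Filter.not_frequently] at hfreq
    obtain ⟨N, hN⟩ := eventually_atTop.1 (hfreq.mono fun n h => lt_of_not_ge h)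
    exact tendsto_nhds_unique (hFn.comp (tendsto_add_atTop_nat N))
      (tendsto_Fpot_right hmom humeas hu y _ (hyn.comp (tendsto_add_atTop_nat N))
        (fun n => hN _ (Nat.le_add_left N n)))

lemma Sset_closed (ρ : Measure ℝ) (u₀ : ℝ → ℝ) (τ x t : ℝ) :
    IsClosed (Sset ρ u₀ τ x t) := by
  have hchar : Sset ρ u₀ τ x t = {y | ∀ ε > 0, ∃ z, |z - y| < ε ∧
      |Fpot ρ u₀ τ z x t - nuEP ρ u₀ τ x t| < ε} := by
    ext y
    constructor
    · rintro ⟨yn, h1, h2⟩ ε hε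
      obtain ⟨N1, hN1⟩ := Metric.tendsto_atTop.1 h1 ε hε
      obtain ⟨N2, hN2⟩ := Metric.tendsto_atTop.1 h2 ε hε
      exact ⟨yn (max N1 N2), by simpa [Real.dist_eq] using hN1 _ (le_max_left _ _),
        by simpa [Real.dist_eq] using hN2 _ (le_max_right _ _)⟩
    · intro hy
      choose z h1 h2 using fun n : ℕ => hy (1/((n:ℝ)+1)) (by positivity)
      refine ⟨z, ?_, ?_⟩
      · rw [tendsto_iff_dist_tendsto_zero]
        exact squeeze_zero (fun n => dist_nonneg)
          (fun n => le_of_lt (by simpa [Real.dist_eq] using h1 n))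
          tendsto_one_div_add_atTop_nhds_zero_nat
      · rw [tendsto_iff_dist_tendsto_zero]
        exact squeeze_zero (fun n => dist_nonneg)
          (fun n => le_of_lt (by simpa [Real.dist_eq] using h2 n))
          tendsto_one_div_add_atTop_nhds_zero_nat
  rw [hchar]
  apply isClosed_of_closure_subset
  intro y hy ε hε
  obtain ⟨w, hw, hwy⟩ := Metric.mem_closure_iff.1 hy (ε/2) (by positivity)
  obtain ⟨z, hz1, hz2⟩ := hw (ε/2) (by positivity)
  rw [Real.dist_eq] at hwy
  refine ⟨z, ?_, lt_trans hz2 (by linarith)⟩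
  calc |z - y| ≤ |z - w| + |w - y| := abs_sub_le z w y
    _ < ε := by rw [abs_sub_comm y w] at hwy; linarith

lemma msupp_closed (ρ : Measure ℝ) : IsClosed (msupp ρ) := by
  rw [← isOpen_compl_iff, isOpen_iff_mem_nhds]
  intro z hz
  simp only [mem_compl_iff, msupp, mem_setOf_eq, not_forall] at hz
  obtain ⟨U, hU, hρU⟩ := hz
  obtain ⟨V, hVU, hV, hzV⟩ := mem_nhds_iff.1 hU
  refine mem_of_superset (hV.mem_nhds hzV) fun w hw => ?_
  simp only [mem_compl_iff, msupp, mem_setOf_eq, not_forall]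
  exact ⟨V, hV.mem_nhds hw, fun h0 => hρU (lt_of_lt_of_le h0 (measure_mono hVU))⟩

end S13

namespace S13

variable {ρ : Measure ℝ} [IsFiniteMeasure ρ] {u₀ : ℝ → ℝ} {U₀ τ x t : ℝ}

lemma bddBelow_S (hρ : ρ ≠ 0) (hτ : 0 < τ) (ht : 0 < t)
    (hmom : Integrable (fun η : ℝ => η) ρ) (humeas : Measurable u₀)
    (hu : ∀ᵐ η ∂ρ, |u₀ η| ≤ U₀) :
    BddBelow (Sset ρ u₀ τ x t ∩ msupp ρ) := by
  by_cases hc : ∃ c, ρ (Iio c) = 0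
  · obtain ⟨c, hc⟩ := hc
    refine ⟨c, fun z hz => ?_⟩
    by_contra h
    push_neg at h
    have h0 : (0:ENNReal) < ρ (Iio c) := hz.2 (Iio c) (Iio_mem_nhds h)
    rw [hc] at h0
    exact lt_irrefl _ h0
  · push_neg at hc
    have hint := integrable_psi ρ u₀ U₀ τ x t hmom humeas hu
    have hms := measurable_psi ρ u₀ τ x t humeas
    have hU₀ : 0 ≤ U₀ := by
      have : (ae ρ).NeBot := ae_neBot.2 hρ
      obtain ⟨η, hη⟩ := hu.exists
      exact (abs_nonneg _).trans hη
    have hMn : (0:ℝ) ≤ Mtot ρ := ENNReal.toReal_nonneg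
    set D := U₀ * τ + Mtot ρ * (2*τ^2 + τ*t) with hD
    set K₁ := x - D - 1 with hK₁
    have he1 : Real.exp (-t/τ) ≤ 1 := Real.exp_le_one_iff.2 (by
      apply div_nonpos_of_nonpos_of_nonneg <;> linarith)
    have he0 : (0:ℝ) < Real.exp (-t/τ) := Real.exp_pos _
    have hbound : ∀ᵐ η ∂ρ, η < K₁ → psi ρ u₀ τ x t η ≤ -1 := by
      filter_upwards [hu] with η hη hlt
      have hM := abs_mtilde_le ρ η
      have h1 : u₀ η * (τ * (1 - Real.exp (-t/τ))) ≤ U₀ * τ := by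
        refine le_of_abs_le ?_
        rw [abs_mul]
        apply mul_le_mul hη ?_ (abs_nonneg _) hU₀
        rw [abs_of_nonneg (by nlinarith)]
        nlinarith
      have h2 : mtilde ρ η * (τ^2 - τ^2 * Real.exp (-t/τ) - τ*t)
          ≤ Mtot ρ * (2*τ^2 + τ*t) := by
        refine le_of_abs_le ?_
        rw [abs_mul]
        apply mul_le_mul hM ?_ (abs_nonneg _) hMn
        rw [abs_le]
        constructor <;> nlinarith
      show η + u₀ η * (τ * (1 - Real.exp (-t / τ)))
        + mtilde ρ η * (τ ^ 2 - τ ^ 2 * Real.exp (-t / τ) - τ * t) - x ≤ -1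
      have : η < x - (U₀ * τ + Mtot ρ * (2*τ^2 + τ*t)) - 1 := hlt
      linarith
    have hν : nuEP ρ u₀ τ x t ≤ - (ρ (Iio K₁)).toReal := by
      have h1 : nuEP ρ u₀ τ x t ≤ Fpot ρ u₀ τ K₁ x t := nuEP_le hmom humeas hu _
      have h2 : Fpot ρ u₀ τ K₁ x t ≤ ∫ _η in Iio K₁, (-1 : ℝ) ∂ρ := by
        rw [Fpot_eq_psi]
        apply integral_mono_ae hint.integrableOn (integrable_const _)
        filter_upwards [ae_restrict_mem measurableSet_Iio, ae_restrict_of_ae hbound]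
          with η hmem hb
        exact hb hmem
      rw [setIntegral_const] at h2
      simp only [smul_eq_mul, mul_neg_one, measureReal_def] at h2
      linarith
    have hε₀ : 0 < (ρ (Iio K₁)).toReal :=
      ENNReal.toReal_pos (hc K₁) (measure_ne_top _ _)
    have htail : Tendsto (fun n : ℕ => ∫ η in Iio (-(n:ℝ)), |psi ρ u₀ τ x t η| ∂ρ)
        atTop (𝓝 0) := by
      have key : ∀ n : ℕ, ∫ η in Iio (-(n:ℝ)), |psi ρ u₀ τ x t η| ∂ρ
          = ∫ η, (Iio (-(n:ℝ))).indicator (fun η => |psi ρ u₀ τ x t η|) η ∂ρ :=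
        fun n => (integral_indicator measurableSet_Iio).symm
      simp_rw [key]
      have h0 : (0:ℝ) = ∫ _η, (0:ℝ) ∂ρ := by simp
      rw [h0]
      apply tendsto_integral_of_dominated_convergence (fun η => |psi ρ u₀ τ x t η|)
      · intro n; exact (hms.abs.indicator measurableSet_Iio).aestronglyMeasurable
      · exact hint.abs
      · intro n
        exact ae_of_all _ fun η => by
          simpa [Real.norm_eq_abs, abs_abs] using
            norm_indicator_le_norm_self (fun η => |psi ρ u₀ τ x t η|) η
      · refine ae_of_all _ fun η => ?_
        have hev : ∀ᶠ n : ℕ in atTop,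
            (Iio (-(n:ℝ))).indicator (fun η => |psi ρ u₀ τ x t η|) η = 0 := by
          rw [eventually_atTop]
          refine ⟨⌈-η⌉₊ + 1, fun n hn => indicator_of_notMem ?_ _⟩
          simp only [mem_Iio, not_lt]
          have h1 : -η ≤ (⌈-η⌉₊ : ℝ) := Nat.le_ceil _
          have h2 : ((⌈-η⌉₊ + 1 : ℕ) : ℝ) ≤ (n:ℝ) := Nat.cast_le.2 hn
          push_cast at h2
          linarith
        exact Tendsto.congr' (hev.mono fun _ h => h.symm) tendsto_const_nhds
    obtain ⟨N, hN⟩ := (htail.eventually_lt_const hε₀).exists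
    refine ⟨-(N:ℝ) - 1, fun z hz => ?_⟩
    by_contra hcon
    push_neg at hcon
    have hsub : ∀ s : Set ℝ, s ⊆ Iio (-(N:ℝ)) → MeasurableSet s →
        |∫ η in s, psi ρ u₀ τ x t η ∂ρ| < (ρ (Iio K₁)).toReal := by
      intro s hs _hsm
      calc |∫ η in s, psi ρ u₀ τ x t η ∂ρ| ≤ ∫ η in s, |psi ρ u₀ τ x t η| ∂ρ := by
            simpa [Real.norm_eq_abs] using
              norm_integral_le_integral_norm (μ := ρ.restrict s) (psi ρ u₀ τ x t)
        _ ≤ ∫ η in Iio (-(N:ℝ)), |psi ρ u₀ τ x t η| ∂ρ :=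
            setIntegral_mono_set hint.abs.integrableOn
              (ae_of_all _ fun η => abs_nonneg _) (HasSubset.Subset.eventuallyLE hs)
        _ < _ := hN
    rcases S_value hmom humeas hu z hz.1 with h | h
    · have h1 := hsub (Iio z) (Iio_subset_Iio (by linarith)) measurableSet_Iio
      rw [← Fpot_eq_psi, ← h] at h1
      have := (abs_lt.1 h1).1
      linarith
    · have h1 := hsub (Iic z) (fun η hη => by
        simp only [mem_Iic] at hη; simp only [mem_Iio]; linarith) measurableSet_Iic
      rw [← FpotP_eq_psi, ← h] at h1
      have := (abs_lt.1 h1).1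
      linarith

lemma ystar_mem (hρ : ρ ≠ 0) (hτ : 0 < τ) (ht : 0 < t)
    (hmom : Integrable (fun η : ℝ => η) ρ) (humeas : Measurable u₀)
    (hu : ∀ᵐ η ∂ρ, |u₀ η| ≤ U₀)
    (hS : (Sset ρ u₀ τ x t ∩ msupp ρ).Nonempty) :
    ystar ρ u₀ τ x t ∈ Sset ρ u₀ τ x t ∩ msupp ρ :=
  IsClosed.csInf_mem ((Sset_closed ρ u₀ τ x t).inter (msupp_closed ρ)) hS
    (bddBelow_S hρ hτ ht hmom humeas hu)

lemma nu_attained (hρ : ρ ≠ 0) (hτ : 0 < τ) (ht : 0 < t)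
    (hmom : Integrable (fun η : ℝ => η) ρ) (humeas : Measurable u₀)
    (hu : ∀ᵐ η ∂ρ, |u₀ η| ≤ U₀)
    (hS : (Sset ρ u₀ τ x t ∩ msupp ρ).Nonempty) :
    nuEP ρ u₀ τ x t = Fpot ρ u₀ τ (ystar ρ u₀ τ x t) x t ∨
      nuEP ρ u₀ τ x t = FpotP ρ u₀ τ (ystar ρ u₀ τ x t) x t :=
  S_value hmom humeas hu _ (ystar_mem hρ hτ ht hmom humeas hu hS).1

end S13

namespace S13

lemma danskin_right {K : Set (ℝ × ℝ × ℝ)} (hK : IsCompact K)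
    {u v u' v' : ℝ → ℝ}
    (hud : ∀ s, HasDerivAt u (u' s) s) (hvd : ∀ s, HasDerivAt v (v' s) s)
    (hu'c : Continuous u') (hv'c : Continuous v')
    {G : ℝ → ℝ} {t T : ℝ} (hT : t < T)
    (hle : ∀ s ∈ Icc t T, ∀ p ∈ K, G s ≤ p.1 + p.2.1 * u s + p.2.2 * v s)
    (hatt : ∀ s ∈ Icc t T, ∃ p ∈ K, p.1 + p.2.1 * u s + p.2.2 * v s = G s) :
    ∃ m : ℝ, HasDerivWithinAt G m (Ioi t) t ∧
      (∃ p ∈ K, p.1 + p.2.1 * u t + p.2.2 * v t = G t ∧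
        m = p.2.1 * u' t + p.2.2 * v' t) ∧
      (∀ p ∈ K, p.1 + p.2.1 * u t + p.2.2 * v t = G t →
        m ≤ p.2.1 * u' t + p.2.2 * v' t) := by
  have hucont : Continuous u := continuous_iff_continuousAt.2 fun s => (hud s).continuousAt
  have hvcont : Continuous v := continuous_iff_continuousAt.2 fun s => (hvd s).continuousAt
  set f : ℝ × ℝ × ℝ → ℝ → ℝ := fun p s => p.1 + p.2.1 * u s + p.2.2 * v s with hf
  set d : ℝ × ℝ × ℝ → ℝ → ℝ := fun p s => p.2.1 * u' s + p.2.2 * v' s with hd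
  have hfd : ∀ (p : ℝ × ℝ × ℝ) (s : ℝ), HasDerivAt (fun r => f p r) (d p s) s := by
    intro p s
    have h1 : HasDerivAt (fun r => p.2.1 * u r) (p.2.1 * u' s) s := (hud s).const_mul _
    have h2 : HasDerivAt (fun r => p.2.2 * v r) (p.2.2 * v' s) s := (hvd s).const_mul _
    refine (((hasDerivAt_const s p.1).add h1).add h2).congr_deriv ?_
    simp [hd]
  have hfc : ∀ p : ℝ × ℝ × ℝ, Continuous (fun s => f p s) := fun p =>
    (continuous_const.add (continuous_const.mul hucont)).add (continuous_const.mul hvcont)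
  have hdc : ∀ p : ℝ × ℝ × ℝ, Continuous (fun s => d p s) := fun p =>
    (continuous_const.mul hu'c).add (continuous_const.mul hv'c)
  have htT : t ∈ Icc t T := ⟨le_refl t, hT.le⟩
  set At := {p ∈ K | f p t = G t} with hAt
  have hAtne : At.Nonempty := by
    obtain ⟨p, hp, he⟩ := hatt t htT; exact ⟨p, hp, he⟩
  have hAtc : IsCompact At := by
    have : At = K ∩ {p | f p t = G t} := rfl
    rw [this]
    refine hK.inter_right (isClosed_eq ?_ continuous_const)
    exact (continuous_fst.add ((continuous_fst.comp continuous_snd).mul continuous_const)).add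
      ((continuous_snd.comp continuous_snd).mul continuous_const)
  have hdtc : Continuous (fun p : ℝ × ℝ × ℝ => d p t) :=
    ((continuous_fst.comp continuous_snd).mul continuous_const).add
      ((continuous_snd.comp continuous_snd).mul continuous_const)
  have himgc : IsCompact ((fun p => d p t) '' At) := hAtc.image hdtc
  have himgne : ((fun p => d p t) '' At).Nonempty := hAtne.image _
  set m := sInf ((fun p => d p t) '' At) with hm
  obtain ⟨p₀, hp₀At, hp₀⟩ := himgc.sInf_mem himgne
  have hmle : ∀ p ∈ At, m ≤ d p t := fun p hp =>
    csInf_le himgc.bddBelow (mem_image_of_mem _ hp)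
  refine ⟨m, ?_, ⟨p₀, hp₀At.1, hp₀At.2, hp₀.symm⟩, fun p hpK hpatt => hmle p ⟨hpK, hpatt⟩⟩
  -- bound on K coordinates
  obtain ⟨R, hR⟩ := Bornology.IsBounded.exists_norm_le hK.isBounded
  have hcoord : ∀ p ∈ K, |p.2.1| ≤ R ∧ |p.2.2| ≤ R := by
    intro p hp
    have h1 : ‖p.2‖ ≤ R := le_trans (norm_snd_le p) (hR p hp)
    constructor
    · calc |p.2.1| = ‖p.2.1‖ := (Real.norm_eq_abs _).symm
        _ ≤ ‖p.2‖ := norm_fst_le p.2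
        _ ≤ R := h1
    · calc |p.2.2| = ‖p.2.2‖ := (Real.norm_eq_abs _).symm
        _ ≤ ‖p.2‖ := norm_snd_le p.2
        _ ≤ R := h1
  have hfdiff : ∀ p ∈ K, ∀ s : ℝ, |f p s - f p t| ≤ R * |u s - u t| + R * |v s - v t| := by
    intro p hp s
    have he : f p s - f p t = p.2.1 * (u s - u t) + p.2.2 * (v s - v t) := by
      simp only [hf]; ring
    rw [he]
    calc |p.2.1 * (u s - u t) + p.2.2 * (v s - v t)|
        ≤ |p.2.1 * (u s - u t)| + |p.2.2 * (v s - v t)| := abs_add_le _ _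
      _ ≤ R * |u s - u t| + R * |v s - v t| := by
          rw [abs_mul, abs_mul]
          exact add_le_add (mul_le_mul_of_nonneg_right (hcoord p hp).1 (abs_nonneg _))
            (mul_le_mul_of_nonneg_right (hcoord p hp).2 (abs_nonneg _))
  have hGd : ∀ s ∈ Icc t T, |G s - G t| ≤ R * |u s - u t| + R * |v s - v t| := by
    intro s hs
    obtain ⟨ps, hpsK, hps⟩ := hatt s hs
    obtain ⟨pt, hptK, hpt⟩ := hatt t htT
    rw [abs_le]
    constructor
    · have h2 : f ps s - f ps t ≤ G s - G t := by
        have := hle t htT ps hpsK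
        have := hps
        simp only [hf] at *
        linarith
      have h3 := (abs_le.1 (hfdiff ps hpsK s)).1
      linarith
    · have h1 : G s - G t ≤ f pt s - f pt t := by
        have := hle s hs pt hptK
        have := hpt
        simp only [hf] at *
        linarith
      have h3 := (abs_le.1 (hfdiff pt hptK s)).2
      linarith
  -- slope convergence
  rw [hasDerivWithinAt_iff_tendsto_slope]
  have hIoi : (Ioi t) \ {t} = Ioi t := diff_singleton_eq_self (fun h => lt_irrefl t (mem_Ioi.1 h))
  rw [hIoi]
  apply Filter.tendsto_of_subseq_tendsto
  intro sseq hsseq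
  have hIooev : ∀ᶠ n in atTop, sseq n ∈ Ioo t T :=
    hsseq (Ioo_mem_nhdsGT_of_mem ⟨le_refl t, hT⟩)
  have hsseqt : Tendsto sseq atTop (𝓝 t) := hsseq.mono_right nhdsWithin_le_nhds
  have hchoice : ∀ n, ∃ p, p ∈ K ∧ (sseq n ∈ Ioo t T → f p (sseq n) = G (sseq n)) := by
    intro n
    by_cases h : sseq n ∈ Ioo t T
    · obtain ⟨p, hp, he⟩ := hatt (sseq n) ⟨h.1.le, h.2.le⟩
      exact ⟨p, hp, fun _ => he⟩
    · exact ⟨p₀, hp₀At.1, fun hc => absurd hc h⟩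
  choose pn hpnK hpnval using hchoice
  obtain ⟨pbar, hpbarK, ms, hmsmono, hmstend⟩ := hK.tendsto_subseq hpnK
  refine ⟨ms, ?_⟩
  set s2 : ℕ → ℝ := fun k => sseq (ms k) with hs2
  have hs2t : Tendsto s2 atTop (𝓝 t) := hsseqt.comp hmsmono.tendsto_atTop
  have hs2Ioo : ∀ᶠ k in atTop, s2 k ∈ Ioo t T := hmsmono.tendsto_atTop.eventually hIooev
  have hp2 : Tendsto (fun k => pn (ms k)) atTop (𝓝 pbar) := hmstend
  have h1c : Tendsto (fun k => (pn (ms k)).1) atTop (𝓝 pbar.1) :=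
    (continuous_fst.tendsto pbar).comp hp2
  have h21c : Tendsto (fun k => (pn (ms k)).2.1) atTop (𝓝 pbar.2.1) :=
    ((continuous_fst.comp continuous_snd).tendsto pbar).comp hp2
  have h22c : Tendsto (fun k => (pn (ms k)).2.2) atTop (𝓝 pbar.2.2) :=
    ((continuous_snd.comp continuous_snd).tendsto pbar).comp hp2
  have hus : Tendsto (fun k => u (s2 k)) atTop (𝓝 (u t)) := (hucont.tendsto t).comp hs2t
  have hvs : Tendsto (fun k => v (s2 k)) atTop (𝓝 (v t)) := (hvcont.tendsto t).comp hs2t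
  have hflim : Tendsto (fun k => f (pn (ms k)) (s2 k)) atTop (𝓝 (f pbar t)) :=
    (h1c.add (h21c.mul hus)).add (h22c.mul hvs)
  have hGlim : Tendsto (fun k => G (s2 k)) atTop (𝓝 (G t)) := by
    rw [tendsto_iff_dist_tendsto_zero]
    have hzero : Tendsto (fun k => R * |u (s2 k) - u t| + R * |v (s2 k) - v t|)
        atTop (𝓝 0) := by
      have h1 : Tendsto (fun k => R * |u (s2 k) - u t| + R * |v (s2 k) - v t|)
          atTop (𝓝 (R * |u t - u t| + R * |v t - v t|)) := by
        refine Tendsto.add (Tendsto.const_mul _ ?_) (Tendsto.const_mul _ ?_)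
        · exact (continuous_abs.tendsto _).comp (hus.sub_const _)
        · exact (continuous_abs.tendsto _).comp (hvs.sub_const _)
      simpa using h1
    refine squeeze_zero' (Eventually.of_forall fun k => dist_nonneg) ?_ hzero
    filter_upwards [hs2Ioo] with k hk
    simpa [Real.dist_eq] using hGd (s2 k) ⟨hk.1.le, hk.2.le⟩
  have hfval : ∀ᶠ k in atTop, f (pn (ms k)) (s2 k) = G (s2 k) := by
    filter_upwards [hs2Ioo] with k hk
    exact hpnval (ms k) hk
  have hpbarAt : pbar ∈ At := by
    refine ⟨hpbarK, ?_⟩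
    exact tendsto_nhds_unique (hflim.congr' hfval) hGlim
  -- MVT points
  have hζex : ∀ (p : ℝ × ℝ × ℝ) (k : ℕ), ∃ c : ℝ, s2 k ∈ Ioo t T →
      c ∈ Ioo t (s2 k) ∧ d p c = (f p (s2 k) - f p t) / (s2 k - t) := by
    intro p k
    by_cases h : s2 k ∈ Ioo t T
    · obtain ⟨c, hc1, hc2⟩ := exists_hasDerivAt_eq_slope (fun s => f p s) (fun s => d p s)
        h.1 (hfc p).continuousOn (fun r _ => hfd p r)
      exact ⟨c, fun _ => ⟨hc1, hc2⟩⟩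
    · exact ⟨t, fun hc => absurd hc h⟩
  choose ζ hζ using fun k => hζex p₀ k
  choose ξ hξ using fun k => hζex (pn (ms k)) k
  have hζt : Tendsto ζ atTop (𝓝 t) := by
    refine tendsto_of_tendsto_of_tendsto_of_le_of_le' tendsto_const_nhds hs2t ?_ ?_
    · filter_upwards [hs2Ioo] with k hk; exact ((hζ k hk).1.1).le
    · filter_upwards [hs2Ioo] with k hk; exact ((hζ k hk).1.2).le
  have hξt : Tendsto ξ atTop (𝓝 t) := by
    refine tendsto_of_tendsto_of_tendsto_of_le_of_le' tendsto_const_nhds hs2t ?_ ?_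
    · filter_upwards [hs2Ioo] with k hk; exact ((hξ k hk).1.1).le
    · filter_upwards [hs2Ioo] with k hk; exact ((hξ k hk).1.2).le
  have huplim : Tendsto (fun k => d p₀ (ζ k)) atTop (𝓝 m) := by
    have := ((hdc p₀).tendsto t).comp hζt
    rwa [show d p₀ t = m from hp₀] at this
  have hlowlim : Tendsto (fun k => d (pn (ms k)) (ξ k)) atTop (𝓝 (d pbar t)) := by
    have hu' : Tendsto (fun k => u' (ξ k)) atTop (𝓝 (u' t)) := (hu'c.tendsto t).comp hξt
    have hv' : Tendsto (fun k => v' (ξ k)) atTop (𝓝 (v' t)) := (hv'c.tendsto t).comp hξt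
    exact (h21c.mul hu').add (h22c.mul hv')
  have hslope_le : ∀ᶠ k in atTop, slope G t (s2 k) ≤ d p₀ (ζ k) := by
    filter_upwards [hs2Ioo] with k hk
    have hpos : 0 < s2 k - t := sub_pos.2 hk.1
    rw [slope_def_field, (hζ k hk).2]
    rw [div_le_div_iff_of_pos_right hpos]
    have h1 := hle (s2 k) ⟨hk.1.le, hk.2.le⟩ p₀ hp₀At.1
    have h2 := hp₀At.2
    simp only [hf] at *
    linarith
  have hslope_ge : ∀ᶠ k in atTop, d (pn (ms k)) (ξ k) ≤ slope G t (s2 k) := by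
    filter_upwards [hs2Ioo] with k hk
    have hpos : 0 < s2 k - t := sub_pos.2 hk.1
    rw [slope_def_field, (hξ k hk).2]
    rw [div_le_div_iff_of_pos_right hpos]
    have h1 := hle t htT (pn (ms k)) (hpnK (ms k))
    have h2 := hpnval (ms k) hk
    simp only [hf] at *
    linarith
  have hmeq : d pbar t = m := by
    refine le_antisymm ?_ (hmle pbar hpbarAt)
    refine le_of_tendsto_of_tendsto hlowlim huplim ?_
    filter_upwards [hslope_le, hslope_ge] with k h1 h2
    exact h2.trans h1
  refine tendsto_of_tendsto_of_tendsto_of_le_of_le' (hmeq ▸ hlowlim) huplim hslope_ge hslope_le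

end S13

namespace S13

lemma danskin_left {K : Set (ℝ × ℝ × ℝ)} (hK : IsCompact K)
    {u v u' v' : ℝ → ℝ}
    (hud : ∀ s, HasDerivAt u (u' s) s) (hvd : ∀ s, HasDerivAt v (v' s) s)
    (hu'c : Continuous u') (hv'c : Continuous v')
    {G : ℝ → ℝ} {t T : ℝ} (hT : T < t)
    (hle : ∀ s ∈ Icc T t, ∀ p ∈ K, G s ≤ p.1 + p.2.1 * u s + p.2.2 * v s)
    (hatt : ∀ s ∈ Icc T t, ∃ p ∈ K, p.1 + p.2.1 * u s + p.2.2 * v s = G s) :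
    ∃ m : ℝ, HasDerivWithinAt G m (Iio t) t ∧
      (∃ p ∈ K, p.1 + p.2.1 * u t + p.2.2 * v t = G t ∧
        m = p.2.1 * u' t + p.2.2 * v' t) ∧
      (∀ p ∈ K, p.1 + p.2.1 * u t + p.2.2 * v t = G t →
        p.2.1 * u' t + p.2.2 * v' t ≤ m) := by
  have hud2 : ∀ s : ℝ, HasDerivAt (fun r => u (-r)) (-u' (-s)) s := by
    intro s
    have h := (hud (-s)).comp s (hasDerivAt_neg s)
    simpa [mul_comm, Function.comp_def] using h
  have hvd2 : ∀ s : ℝ, HasDerivAt (fun r => v (-r)) (-v' (-s)) s := by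
    intro s
    have h := (hvd (-s)).comp s (hasDerivAt_neg s)
    simpa [mul_comm, Function.comp_def] using h
  obtain ⟨m2, hder, ⟨p, hpK, hpatt, hpval⟩, hbnd⟩ :=
    danskin_right (u := fun r => u (-r)) (v := fun r => v (-r))
      (u' := fun s => -u' (-s)) (v' := fun s => -v' (-s))
      (G := fun s => G (-s)) (t := -t) (T := -T) hK hud2 hvd2
      ((hu'c.comp continuous_neg).neg) ((hv'c.comp continuous_neg).neg)
      (by linarith)
      (fun s hs p hp => hle (-s) ⟨by linarith [hs.2], by linarith [hs.1]⟩ p hp)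
      (fun s hs => hatt (-s) ⟨by linarith [hs.2], by linarith [hs.1]⟩)
  rw [neg_neg] at hpatt hpval
  refine ⟨-m2, ?_, ⟨p, hpK, hpatt, by rw [hpval]; ring⟩, ?_⟩
  · have hneg : HasDerivWithinAt (fun r : ℝ => -r) (-1 : ℝ) (Iio t) t :=
      (hasDerivAt_neg t).hasDerivWithinAt
    have hmap : MapsTo (fun r : ℝ => -r) (Iio t) (Ioi (-t)) := fun r hr => by
      simp only [mem_Ioi]; simp only [mem_Iio] at hr; linarith
    have h3 := HasDerivWithinAt.comp t hder hneg hmap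
    have h4 : HasDerivWithinAt G (m2 * -1) (Iio t) t :=
      h3.congr (fun r _ => by simp) (by simp)
    convert h4 using 1
    ring
  · intro p' hp' hatt'
    have := hbnd p' hp' (by rw [neg_neg]; exact hatt')
    rw [neg_neg] at this
    linarith

lemma hasDerivAt_aa {τ : ℝ} (hτ : 0 < τ) (s : ℝ) :
    HasDerivAt (fun r : ℝ => τ * (1 - Real.exp (-r / τ))) (Real.exp (-s / τ)) s := by
  have h1 : HasDerivAt (fun r : ℝ => -r / τ) (-1 / τ) s := (hasDerivAt_id s).neg.div_const τ
  have h2 := h1.exp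
  have h3 := ((hasDerivAt_const s (1:ℝ)).sub h2).const_mul τ
  refine h3.congr_deriv ?_
  field_simp
  ring

lemma hasDerivAt_bb {τ : ℝ} (hτ : 0 < τ) (s : ℝ) :
    HasDerivAt (fun r : ℝ => τ ^ 2 - τ ^ 2 * Real.exp (-r / τ) - τ * r)
      (τ * Real.exp (-s / τ) - τ) s := by
  have h1 : HasDerivAt (fun r : ℝ => -r / τ) (-1 / τ) s := (hasDerivAt_id s).neg.div_const τ
  have h2 := (h1.exp).const_mul (τ ^ 2)
  have h3 := ((hasDerivAt_const s (τ^2)).sub h2).sub ((hasDerivAt_id s).const_mul τ)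
  refine h3.congr_deriv ?_
  field_simp
  ring

noncomputable def GamSet (ρ : Measure ℝ) (u₀ : ℝ → ℝ) (x : ℝ) : Set (ℝ × ℝ × ℝ) :=
  (range fun y => (AA ρ x y, BB ρ u₀ y, CC ρ y))
    ∪ (range fun y => (AAp ρ x y, BBp ρ u₀ y, CCp ρ y))

noncomputable def KSet (ρ : Measure ℝ) (u₀ : ℝ → ℝ) (x : ℝ) : Set (ℝ × ℝ × ℝ) :=
  closure (GamSet ρ u₀ x)

lemma KSet_compact (ρ : Measure ℝ) [IsFiniteMeasure ρ] (u₀ : ℝ → ℝ) (U₀ x : ℝ)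
    (hmom : Integrable (fun η : ℝ => η) ρ) (humeas : Measurable u₀)
    (hu : ∀ᵐ η ∂ρ, |u₀ η| ≤ U₀) : IsCompact (KSet ρ u₀ x) := by
  set R₀ := (∫ η, |η - x| ∂ρ) + (∫ η, |u₀ η| ∂ρ) + (∫ η, |mtilde ρ η| ∂ρ) with hR₀
  have hi1 : Integrable (fun η : ℝ => η - x) ρ := hmom.sub (integrable_const x)
  have hi2 : Integrable u₀ ρ := integrable_u0 ρ u₀ U₀ humeas hu
  have hi3 : Integrable (mtilde ρ) ρ := integrable_mtilde ρ
  have hn1 : (0:ℝ) ≤ ∫ η, |η - x| ∂ρ := integral_nonneg fun η => abs_nonneg _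
  have hn2 : (0:ℝ) ≤ ∫ η, |u₀ η| ∂ρ := integral_nonneg fun η => abs_nonneg _
  have hn3 : (0:ℝ) ≤ ∫ η, |mtilde ρ η| ∂ρ := integral_nonneg fun η => abs_nonneg _
  have hsub : GamSet ρ u₀ x ⊆ Metric.closedBall 0 R₀ := by
    rintro p (⟨y, rfl⟩ | ⟨y, rfl⟩) <;>
    · rw [mem_closedBall_zero_iff]
      rw [Prod.norm_def, Prod.norm_def]
      refine max_le ?_ (max_le ?_ ?_) <;>
        simp only [Real.norm_eq_abs] <;>
        [skip; skip; skip]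
      · exact le_trans (abs_setIntegral_le ρ _ hi1 _) (by linarith)
      · exact le_trans (abs_setIntegral_le ρ _ hi2 _) (by linarith)
      · exact le_trans (abs_setIntegral_le ρ _ hi3 _) (by linarith)
  apply Metric.isCompact_of_isClosed_isBounded isClosed_closure
  exact Metric.isBounded_closedBall.subset
    (closure_minimal hsub Metric.isClosed_closedBall)

lemma hleK (ρ : Measure ℝ) [IsFiniteMeasure ρ] (u₀ : ℝ → ℝ) (U₀ τ x : ℝ)
    (hmom : Integrable (fun η : ℝ => η) ρ) (humeas : Measurable u₀)
    (hu : ∀ᵐ η ∂ρ, |u₀ η| ≤ U₀) (s : ℝ) :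
    ∀ p ∈ KSet ρ u₀ x, nuEP ρ u₀ τ x s ≤ p.1 + p.2.1 * (τ * (1 - Real.exp (-s / τ)))
      + p.2.2 * (τ ^ 2 - τ ^ 2 * Real.exp (-s / τ) - τ * s) := by
  have hcl : IsClosed {p : ℝ × ℝ × ℝ | nuEP ρ u₀ τ x s ≤ p.1
      + p.2.1 * (τ * (1 - Real.exp (-s / τ)))
      + p.2.2 * (τ ^ 2 - τ ^ 2 * Real.exp (-s / τ) - τ * s)} := by
    refine isClosed_le continuous_const ?_
    exact (continuous_fst.add ((continuous_fst.comp continuous_snd).mul continuous_const)).add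
      ((continuous_snd.comp continuous_snd).mul continuous_const)
  have hsub : GamSet ρ u₀ x ⊆ {p : ℝ × ℝ × ℝ | nuEP ρ u₀ τ x s ≤ p.1
      + p.2.1 * (τ * (1 - Real.exp (-s / τ)))
      + p.2.2 * (τ ^ 2 - τ ^ 2 * Real.exp (-s / τ) - τ * s)} := by
    rintro p (⟨y, rfl⟩ | ⟨y, rfl⟩)
    · show nuEP ρ u₀ τ x s ≤ AA ρ x y + BB ρ u₀ y * _ + CC ρ y * _
      rw [← Fpot_eq ρ u₀ U₀ τ y x s hmom humeas hu]
      exact nuEP_le hmom humeas hu y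
    · show nuEP ρ u₀ τ x s ≤ AAp ρ x y + BBp ρ u₀ y * _ + CCp ρ y * _
      rw [← FpotP_eq ρ u₀ U₀ τ y x s hmom humeas hu]
      exact nuEP_le_FpotP hmom humeas hu y
  exact fun p hp => closure_minimal hsub hcl hp

lemma attainerK (ρ : Measure ℝ) [IsFiniteMeasure ρ] (u₀ : ℝ → ℝ) (U₀ τ x : ℝ)
    (hρ : ρ ≠ 0) (hτ : 0 < τ)
    (hmom : Integrable (fun η : ℝ => η) ρ) (humeas : Measurable u₀)
    (hu : ∀ᵐ η ∂ρ, |u₀ η| ≤ U₀) (t : ℝ) (ht : 0 < t)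
    (hS : (Sset ρ u₀ τ x t ∩ msupp ρ).Nonempty) :
    ∃ p ∈ KSet ρ u₀ x,
      (p.1 + p.2.1 * (τ * (1 - Real.exp (-t / τ)))
        + p.2.2 * (τ ^ 2 - τ ^ 2 * Real.exp (-t / τ) - τ * t) = nuEP ρ u₀ τ x t) ∧
      p.2.1 * Real.exp (-t / τ) + p.2.2 * (τ * Real.exp (-t / τ) - τ)
        = qmom ρ u₀ τ x t := by
  by_cases h : nuEP ρ u₀ τ x t = Fpot ρ u₀ τ (ystar ρ u₀ τ x t) x t
  · refine ⟨(AA ρ x (ystar ρ u₀ τ x t), BB ρ u₀ (ystar ρ u₀ τ x t), CC ρ (ystar ρ u₀ τ x t)),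
      subset_closure (Or.inl ⟨ystar ρ u₀ τ x t, rfl⟩), ?_, ?_⟩
    · rw [← Fpot_eq ρ u₀ U₀ τ _ x t hmom humeas hu]
      exact h.symm
    · rw [qmom, if_pos h]
      exact (qint ρ u₀ U₀ humeas hu (Iio (ystar ρ u₀ τ x t)) _ _).symm
  · have h2 : nuEP ρ u₀ τ x t = FpotP ρ u₀ τ (ystar ρ u₀ τ x t) x t :=
      (nu_attained hρ hτ ht hmom humeas hu hS).resolve_left h
    refine ⟨(AAp ρ x (ystar ρ u₀ τ x t), BBp ρ u₀ (ystar ρ u₀ τ x t), CCp ρ (ystar ρ u₀ τ x t)),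
      subset_closure (Or.inr ⟨ystar ρ u₀ τ x t, rfl⟩), ?_, ?_⟩
    · rw [← FpotP_eq ρ u₀ U₀ τ _ x t hmom humeas hu]
      exact h2.symm
    · rw [qmom, if_neg h]
      exact (qint ρ u₀ U₀ humeas hu (Iic (ystar ρ u₀ τ x t)) _ _).symm

end S13

set_option maxHeartbeats 2000000 in
theorem stmt13 (ρ : Measure ℝ) [IsFiniteMeasure ρ] (u₀ : ℝ → ℝ) (U₀ τ : ℝ)
    (hτ : 0 < τ) (hρ : ρ ≠ 0)
    (hmom : Integrable (fun η : ℝ => η) ρ) (humeas : Measurable u₀)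
    (hu : ∀ᵐ η ∂ρ, |u₀ η| ≤ U₀)
    (hne : ∀ x t : ℝ, 0 < t → (Sset ρ u₀ τ x t ∩ msupp ρ).Nonempty) :
    ∀ x t₁ t₂ : ℝ, 0 < t₁ → t₁ ≤ t₂ →
      (∫ t in t₁..t₂, qmom ρ u₀ τ x t) = nuEP ρ u₀ τ x t₂ - nuEP ρ u₀ τ x t₁ := by
  intro x t₁ t₂ ht₁ h12
  classical
  set u : ℝ → ℝ := fun s => τ * (1 - Real.exp (-s / τ)) with hu_def
  set v : ℝ → ℝ := fun s => τ ^ 2 - τ ^ 2 * Real.exp (-s / τ) - τ * s with hv_def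
  set u' : ℝ → ℝ := fun s => Real.exp (-s / τ) with hu'_def
  set v' : ℝ → ℝ := fun s => τ * Real.exp (-s / τ) - τ with hv'_def
  have hKc : IsCompact (S13.KSet ρ u₀ x) := S13.KSet_compact ρ u₀ U₀ x hmom humeas hu
  have hud : ∀ s, HasDerivAt u (u' s) s := fun s => S13.hasDerivAt_aa hτ s
  have hvd : ∀ s, HasDerivAt v (v' s) s := fun s => S13.hasDerivAt_bb hτ s
  have hu'c : Continuous u' := Real.continuous_exp.comp ((continuous_id.neg).div_const τ)
  have hv'c : Continuous v' :=
    (continuous_const.mul (Real.continuous_exp.comp ((continuous_id.neg).div_const τ))).sub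
      continuous_const
  have hucont : Continuous u := continuous_iff_continuousAt.2 fun s => (hud s).continuousAt
  have hvcont : Continuous v := continuous_iff_continuousAt.2 fun s => (hvd s).continuousAt
  set G : ℝ → ℝ := fun s => nuEP ρ u₀ τ x s with hG_def
  have hle : ∀ s : ℝ, ∀ p ∈ S13.KSet ρ u₀ x, G s ≤ p.1 + p.2.1 * u s + p.2.2 * v s :=
    fun s p hp => S13.hleK ρ u₀ U₀ τ x hmom humeas hu s p hp
  have hatt : ∀ s : ℝ, 0 < s → ∃ p, p ∈ S13.KSet ρ u₀ x ∧
      ((p.1 + p.2.1 * u s + p.2.2 * v s = G s) ∧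
      p.2.1 * u' s + p.2.2 * v' s = qmom ρ u₀ τ x s) := by
    intro s hs
    obtain ⟨p, hpK, h1, h2⟩ :=
      S13.attainerK ρ u₀ U₀ τ x hρ hτ hmom humeas hu s hs (hne x s hs)
    exact ⟨p, hpK, h1, h2⟩
  obtain ⟨R, hR⟩ := hKc.isBounded.exists_norm_le
  have hcoord : ∀ p ∈ S13.KSet ρ u₀ x, |p.2.1| ≤ R ∧ |p.2.2| ≤ R := by
    intro p hp
    have h1 : ‖p.2‖ ≤ R := le_trans (norm_snd_le p) (hR p hp)
    constructor
    · calc |p.2.1| = ‖p.2.1‖ := (Real.norm_eq_abs _).symm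
        _ ≤ ‖p.2‖ := norm_fst_le p.2
        _ ≤ R := h1
    · calc |p.2.2| = ‖p.2.2‖ := (Real.norm_eq_abs _).symm
        _ ≤ ‖p.2‖ := norm_snd_le p.2
        _ ≤ R := h1
  have hR0 : 0 ≤ R := by
    obtain ⟨p, hpK, _⟩ := hatt t₁ ht₁
    exact le_trans (norm_nonneg p) (hR p hpK)
  set L : ℝ := R + R * τ with hL_def
  have hfdiff : ∀ p ∈ S13.KSet ρ u₀ x, ∀ s s₀ : ℝ,
      |(p.1 + p.2.1 * u s + p.2.2 * v s) - (p.1 + p.2.1 * u s₀ + p.2.2 * v s₀)|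
        ≤ R * |u s - u s₀| + R * |v s - v s₀| := by
    intro p hp s s₀
    have he : (p.1 + p.2.1 * u s + p.2.2 * v s) - (p.1 + p.2.1 * u s₀ + p.2.2 * v s₀)
        = p.2.1 * (u s - u s₀) + p.2.2 * (v s - v s₀) := by ring
    rw [he]
    calc |p.2.1 * (u s - u s₀) + p.2.2 * (v s - v s₀)|
        ≤ |p.2.1 * (u s - u s₀)| + |p.2.2 * (v s - v s₀)| := abs_add_le _ _
      _ ≤ R * |u s - u s₀| + R * |v s - v s₀| := by
          rw [abs_mul, abs_mul]
          exact add_le_add (mul_le_mul_of_nonneg_right (hcoord p hp).1 (abs_nonneg _))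
            (mul_le_mul_of_nonneg_right (hcoord p hp).2 (abs_nonneg _))
  have hGdist : ∀ s₀ : ℝ, 0 < s₀ → ∀ s : ℝ, 0 < s →
      |G s - G s₀| ≤ R * |u s - u s₀| + R * |v s - v s₀| := by
    intro s₀ h₀ s hs
    obtain ⟨ps, hpsK, hps, _⟩ := hatt s hs
    obtain ⟨p₀, hp₀K, hp₀, _⟩ := hatt s₀ h₀
    rw [abs_le]
    constructor
    · have h2 : (ps.1 + ps.2.1 * u s + ps.2.2 * v s)
          - (ps.1 + ps.2.1 * u s₀ + ps.2.2 * v s₀) ≤ G s - G s₀ := by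
        have := hle s₀ ps hpsK
        linarith [hps]
      have h3 := (abs_le.1 (hfdiff ps hpsK s s₀)).1
      linarith
    · have h1 : G s - G s₀ ≤ (p₀.1 + p₀.2.1 * u s + p₀.2.2 * v s)
          - (p₀.1 + p₀.2.1 * u s₀ + p₀.2.2 * v s₀) := by
        have := hle s p₀ hp₀K
        linarith [hp₀]
      have h3 := (abs_le.1 (hfdiff p₀ hp₀K s s₀)).2
      linarith
  have hGcont : ∀ s₀ : ℝ, 0 < s₀ → ContinuousAt G s₀ := by
    intro s₀ h₀
    rw [ContinuousAt, tendsto_iff_dist_tendsto_zero]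
    have hzero : Tendsto (fun s => R * |u s - u s₀| + R * |v s - v s₀|) (𝓝 s₀) (𝓝 0) := by
      have h1 : Tendsto (fun s => R * |u s - u s₀| + R * |v s - v s₀|) (𝓝 s₀)
          (𝓝 (R * |u s₀ - u s₀| + R * |v s₀ - v s₀|)) := by
        refine Tendsto.add (Tendsto.const_mul _ ?_) (Tendsto.const_mul _ ?_)
        · exact (continuous_abs.tendsto _).comp ((hucont.tendsto s₀).sub_const _)
        · exact (continuous_abs.tendsto _).comp ((hvcont.tendsto s₀).sub_const _)
      simpa using h1
    refine squeeze_zero' (Eventually.of_forall fun s => dist_nonneg) ?_ hzero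
    filter_upwards [eventually_gt_nhds h₀] with s hs
    simpa [Real.dist_eq] using hGdist s₀ h₀ s hs
  -- one sided derivatives
  have hexr : ∀ t : ℝ, ∃ m : ℝ, t ∈ Ioo t₁ t₂ →
      HasDerivWithinAt G m (Ioi t) t ∧ m ≤ qmom ρ u₀ τ x t ∧ |m| ≤ L := by
    intro t
    by_cases ht : t ∈ Ioo t₁ t₂
    · have ht0 : 0 < t := lt_trans ht₁ ht.1
      obtain ⟨m, hder, ⟨pm, hpmK, _, hpmval⟩, hbnd⟩ :=
        S13.danskin_right hKc hud hvd hu'c hv'c (lt_add_one t)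
          (fun s _ p hp => hle s p hp)
          (fun s hs => (hatt s (by linarith [hs.1])).imp fun p hp => ⟨hp.1, hp.2.1⟩)
      obtain ⟨ps, hpsK, hpsatt, hpsq⟩ := hatt t ht0
      refine ⟨m, fun _ => ⟨hder, ?_, ?_⟩⟩
      · rw [← hpsq]; exact hbnd ps hpsK hpsatt
      · rw [hpmval]
        have h1 := (hcoord pm hpmK).1
        have h2 := (hcoord pm hpmK).2
        have hu'b : |u' t| ≤ 1 := by
          show |Real.exp (-t / τ)| ≤ 1
          rw [abs_of_pos (Real.exp_pos _)]
          exact Real.exp_le_one_iff.2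
            (div_nonpos_of_nonpos_of_nonneg (by linarith) hτ.le)
        have hv'b : |v' t| ≤ τ := by
          show |τ * Real.exp (-t / τ) - τ| ≤ τ
          have he1 : Real.exp (-t / τ) ≤ 1 := Real.exp_le_one_iff.2
            (div_nonpos_of_nonpos_of_nonneg (by linarith) hτ.le)
          have he0 : 0 < Real.exp (-t / τ) := Real.exp_pos _
          rw [abs_le]
          constructor <;> nlinarith
        calc |pm.2.1 * u' t + pm.2.2 * v' t|
            ≤ |pm.2.1| * |u' t| + |pm.2.2| * |v' t| := by
              rw [← abs_mul, ← abs_mul]; exact abs_add_le _ _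
          _ ≤ R * 1 + R * τ := add_le_add
              (mul_le_mul h1 hu'b (abs_nonneg _) hR0)
              (mul_le_mul h2 hv'b (abs_nonneg _) hR0)
          _ = L := by rw [hL_def]; ring
    · exact ⟨0, fun hc => absurd hc ht⟩
  choose r hr using hexr
  have hexl : ∀ t : ℝ, ∃ m : ℝ, t ∈ Ioo t₁ t₂ →
      HasDerivWithinAt G m (Iio t) t ∧ qmom ρ u₀ τ x t ≤ m ∧ |m| ≤ L := by
    intro t
    by_cases ht : t ∈ Ioo t₁ t₂
    · have ht0 : 0 < t := lt_trans ht₁ ht.1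
      have hT : t₁ / 2 < t := by linarith [ht.1]
      obtain ⟨m, hder, ⟨pm, hpmK, _, hpmval⟩, hbnd⟩ :=
        S13.danskin_left hKc hud hvd hu'c hv'c hT
          (fun s _ p hp => hle s p hp)
          (fun s hs => (hatt s (by linarith [hs.1])).imp fun p hp => ⟨hp.1, hp.2.1⟩)
      obtain ⟨ps, hpsK, hpsatt, hpsq⟩ := hatt t ht0
      refine ⟨m, fun _ => ⟨hder, ?_, ?_⟩⟩
      · rw [← hpsq]; exact hbnd ps hpsK hpsatt
      · rw [hpmval]
        have h1 := (hcoord pm hpmK).1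
        have h2 := (hcoord pm hpmK).2
        have hu'b : |u' t| ≤ 1 := by
          show |Real.exp (-t / τ)| ≤ 1
          rw [abs_of_pos (Real.exp_pos _)]
          exact Real.exp_le_one_iff.2
            (div_nonpos_of_nonpos_of_nonneg (by linarith) hτ.le)
        have hv'b : |v' t| ≤ τ := by
          show |τ * Real.exp (-t / τ) - τ| ≤ τ
          have he1 : Real.exp (-t / τ) ≤ 1 := Real.exp_le_one_iff.2
            (div_nonpos_of_nonpos_of_nonneg (by linarith) hτ.le)
          have he0 : 0 < Real.exp (-t / τ) := Real.exp_pos _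
          rw [abs_le]
          constructor <;> nlinarith
        calc |pm.2.1 * u' t + pm.2.2 * v' t|
            ≤ |pm.2.1| * |u' t| + |pm.2.2| * |v' t| := by
              rw [← abs_mul, ← abs_mul]; exact abs_add_le _ _
          _ ≤ R * 1 + R * τ := add_le_add
              (mul_le_mul h1 hu'b (abs_nonneg _) hR0)
              (mul_le_mul h2 hv'b (abs_nonneg _) hR0)
          _ = L := by rw [hL_def]; ring
    · exact ⟨0, fun hc => absurd hc ht⟩
  choose l hl using hexl
  set fr : ℝ → ℝ := fun s => if s ∈ Ioo t₁ t₂ then r s else 0 with hfr_def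
  set fl : ℝ → ℝ := fun s => if s ∈ Ioo t₁ t₂ then l s else 0 with hfl_def
  have hIoidiff : ∀ t : ℝ, (Ioi t) \ {t} = Ioi t := fun t =>
    diff_singleton_eq_self (fun h => lt_irrefl t (mem_Ioi.1 h))
  have hIiodiff : ∀ t : ℝ, (Iio t) \ {t} = Iio t := fun t =>
    diff_singleton_eq_self (fun h => lt_irrefl t (mem_Iio.1 h))
  -- measurability of r
  have hrae : AEMeasurable r (volume.restrict (Ioo t₁ t₂)) := by
    have hGn : ∀ n : ℕ, AEMeasurable
        (fun t => (G (t + 1 / ((n:ℝ) + 1)) - G t) * ((n:ℝ) + 1))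
        (volume.restrict (Ioo t₁ t₂)) := by
      intro n
      refine ContinuousOn.aemeasurable ?_ measurableSet_Ioo
      intro t ht
      have ht0 : 0 < t := lt_trans ht₁ ht.1
      have hf1 : ContinuousAt (fun s : ℝ => s + 1 / ((n:ℝ) + 1)) t :=
        (continuous_id.add continuous_const).continuousAt
      have h1 := ContinuousAt.comp (g := G) (f := fun s : ℝ => s + 1 / ((n:ℝ) + 1)) (x := t)
        (hGcont (t + 1 / ((n:ℝ) + 1)) (by positivity)) hf1
      exact (ContinuousAt.mul (h1.sub (hGcont t ht0)) continuousAt_const).continuousWithinAt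
    refine aemeasurable_of_tendsto_metrizable_ae atTop hGn ?_
    filter_upwards [ae_restrict_mem measurableSet_Ioo] with t ht
    have hder := (hr t ht).1
    rw [hasDerivWithinAt_iff_tendsto_slope, hIoidiff t] at hder
    have hz : Tendsto (fun n : ℕ => t + 1 / ((n:ℝ) + 1)) atTop (𝓝[Ioi t] t) := by
      rw [tendsto_nhdsWithin_iff]
      constructor
      · have h := tendsto_const_nhds (x := t) (f := atTop (α := ℕ)) |>.add
          tendsto_one_div_add_atTop_nhds_zero_nat
        simpa using h
      · exact Eventually.of_forall fun n => by
          simp only [mem_Ioi]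
          have : (0:ℝ) < 1 / ((n:ℝ) + 1) := by positivity
          linarith
    have hcomp := hder.comp hz
    refine hcomp.congr fun n => ?_
    show slope G t (t + 1 / ((n:ℝ) + 1)) = _
    rw [slope_def_field, add_sub_cancel_left, one_div, div_inv_eq_mul]
  -- measurability of l
  have hlae : AEMeasurable l (volume.restrict (Ioo t₁ t₂)) := by
    have hGn : ∀ n : ℕ, AEMeasurable
        (fun t => (G t - G (t - t₁ / ((n:ℝ) + 2))) * (((n:ℝ) + 2) / t₁))
        (volume.restrict (Ioo t₁ t₂)) := by
      intro n
      refine ContinuousOn.aemeasurable ?_ measurableSet_Ioo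
      intro t ht
      have ht0 : 0 < t := lt_trans ht₁ ht.1
      have hd2 : t₁ / ((n:ℝ) + 2) ≤ t₁ / 2 :=
        div_le_div_of_nonneg_left ht₁.le (by norm_num) (by
          have : (0:ℝ) ≤ (n:ℝ) := Nat.cast_nonneg n
          linarith)
      have hpos : 0 < t - t₁ / ((n:ℝ) + 2) := by linarith [ht.1]
      have hf1 : ContinuousAt (fun s : ℝ => s - t₁ / ((n:ℝ) + 2)) t :=
        (continuous_id.sub continuous_const).continuousAt
      have h1 := ContinuousAt.comp (g := G) (f := fun s : ℝ => s - t₁ / ((n:ℝ) + 2)) (x := t)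
        (hGcont (t - t₁ / ((n:ℝ) + 2)) hpos) hf1
      exact (ContinuousAt.mul ((hGcont t ht0).sub h1) continuousAt_const).continuousWithinAt
    refine aemeasurable_of_tendsto_metrizable_ae atTop hGn ?_
    filter_upwards [ae_restrict_mem measurableSet_Ioo] with t ht
    have hder := (hl t ht).1
    rw [hasDerivWithinAt_iff_tendsto_slope, hIiodiff t] at hder
    have hz : Tendsto (fun n : ℕ => t - t₁ / ((n:ℝ) + 2)) atTop (𝓝[Iio t] t) := by
      rw [tendsto_nhdsWithin_iff]
      constructor
      · have hd : Tendsto (fun n : ℕ => t₁ / ((n:ℝ) + 2)) atTop (𝓝 0) := by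
          apply Tendsto.div_atTop tendsto_const_nhds
          apply tendsto_atTop_add_const_right
          exact tendsto_natCast_atTop_atTop
        have h := tendsto_const_nhds (x := t) (f := atTop (α := ℕ)) |>.sub hd
        simpa using h
      · exact Eventually.of_forall fun n => by
          simp only [mem_Iio]
          have : (0:ℝ) < t₁ / ((n:ℝ) + 2) := by positivity
          linarith
    have hcomp := hder.comp hz
    refine hcomp.congr fun n => ?_
    show slope G t (t - t₁ / ((n:ℝ) + 2)) = _
    rw [slope_def_field]
    have hzt : t - t₁ / ((n:ℝ) + 2) - t = -(t₁ / ((n:ℝ) + 2)) := by ring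
    rw [hzt, div_neg, ← neg_div, neg_sub, div_div_eq_mul_div, mul_div_assoc]
  -- interval integrability
  have hfrint : IntervalIntegrable fr volume t₁ t₂ := by
    rw [intervalIntegrable_iff_integrableOn_Ioc_of_le h12]
    have hmeas : AEMeasurable fr (volume.restrict (Ioc t₁ t₂)) := by
      have heq : fr = (Ioo t₁ t₂).indicator r := by
        funext s; rw [indicator_apply]
      rw [heq, aemeasurable_indicator_iff measurableSet_Ioo,
        Measure.restrict_restrict measurableSet_Ioo,
        inter_eq_self_of_subset_left Ioo_subset_Ioc_self]
      exact hrae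
    refine Integrable.mono' (g := fun _ => L)
      (integrableOn_const measure_Ioc_lt_top.ne)
      hmeas.aestronglyMeasurable (ae_of_all _ fun s => ?_)
    by_cases hs : s ∈ Ioo t₁ t₂
    · have h := (hr s hs).2.2
      simp only [hfr_def, if_pos hs, Real.norm_eq_abs]
      exact h
    · simp only [hfr_def, if_neg hs, Real.norm_eq_abs, abs_zero]
      have : 0 ≤ L := by rw [hL_def]; nlinarith
      exact this
  have hflint : IntervalIntegrable fl volume t₁ t₂ := by
    rw [intervalIntegrable_iff_integrableOn_Ioc_of_le h12]
    have hmeas : AEMeasurable fl (volume.restrict (Ioc t₁ t₂)) := by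
      have heq : fl = (Ioo t₁ t₂).indicator l := by
        funext s; rw [indicator_apply]
      rw [heq, aemeasurable_indicator_iff measurableSet_Ioo,
        Measure.restrict_restrict measurableSet_Ioo,
        inter_eq_self_of_subset_left Ioo_subset_Ioc_self]
      exact hlae
    refine Integrable.mono' (g := fun _ => L)
      (integrableOn_const measure_Ioc_lt_top.ne)
      hmeas.aestronglyMeasurable (ae_of_all _ fun s => ?_)
    by_cases hs : s ∈ Ioo t₁ t₂
    · have h := (hl s hs).2.2
      simp only [hfl_def, if_pos hs, Real.norm_eq_abs]
      exact h
    · simp only [hfl_def, if_neg hs, Real.norm_eq_abs, abs_zero]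
      have : 0 ≤ L := by rw [hL_def]; nlinarith
      exact this
  -- FTC right derivative
  have hGconton : ContinuousOn G (Icc t₁ t₂) := fun s hs =>
    (hGcont s (lt_of_lt_of_le ht₁ hs.1)).continuousWithinAt
  have hFTC1 : ∫ s in t₁..t₂, fr s = G t₂ - G t₁ := by
    refine intervalIntegral.integral_eq_sub_of_hasDeriv_right_of_le h12 hGconton
      (fun s hs => ?_) hfrint
    have heq : fr s = r s := if_pos hs
    rw [heq]
    exact (hr s hs).1
  -- FTC left derivative via reflection
  have hFTC2 : ∫ s in t₁..t₂, fl s = G t₂ - G t₁ := by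
    have hcont2 : ContinuousOn (fun s => G (-s)) (Icc (-t₂) (-t₁)) := by
      intro s hs
      have hpos : 0 < -s := by
        have := hs.2
        have h1 : s ≤ -t₁ := this
        linarith
      have hf1 : ContinuousAt (fun r : ℝ => -r) s := continuous_neg.continuousAt
      exact (ContinuousAt.comp (g := G) (f := fun r : ℝ => -r) (x := s)
        (hGcont (-s) hpos) hf1).continuousWithinAt
    have hderiv2 : ∀ s ∈ Ioo (-t₂) (-t₁),
        HasDerivWithinAt (fun s => G (-s)) (-(fl (-s))) (Ioi s) s := by
      intro s hs
      have hms : -s ∈ Ioo t₁ t₂ := ⟨by linarith [hs.2], by linarith [hs.1]⟩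
      have h := (hl (-s) hms).1
      have hneg : HasDerivWithinAt (fun r : ℝ => -r) (-1 : ℝ) (Ioi s) s :=
        (hasDerivAt_neg s).hasDerivWithinAt
      have hmap : MapsTo (fun r : ℝ => -r) (Ioi s) (Iio (-s)) := fun w hw => by
        simp only [mem_Iio]; simp only [mem_Ioi] at hw; linarith
      have h3 := HasDerivWithinAt.comp s h hneg hmap
      have heq : fl (-s) = l (-s) := if_pos hms
      rw [heq]
      refine h3.congr_deriv ?_
      ring
    have hint2 : IntervalIntegrable (fun s => -(fl (-s))) volume (-t₂) (-t₁) :=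
      (((IntervalIntegrable.iff_comp_neg (f := fl)).1 hflint).symm).neg
    have h := intervalIntegral.integral_eq_sub_of_hasDeriv_right_of_le
      (by linarith : -t₂ ≤ -t₁) hcont2 hderiv2 hint2
    simp only [neg_neg] at h
    have h2 : ∫ s in (-t₂)..(-t₁), -(fl (-s)) = -∫ s in (-t₂)..(-t₁), fl (-s) := by
      exact intervalIntegral.integral_neg
    rw [h2, intervalIntegral.integral_comp_neg fl] at h
    simp only [neg_neg] at h
    linarith
  -- sandwich
  have hsand : ∀ s ∈ Ioo t₁ t₂, fr s ≤ qmom ρ u₀ τ x s ∧ qmom ρ u₀ τ x s ≤ fl s := by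
    intro s hs
    constructor
    · have heq : fr s = r s := if_pos hs
      rw [heq]; exact (hr s hs).2.1
    · have heq : fl s = l s := if_pos hs
      rw [heq]; exact (hl s hs).2.1
  have hnonneg : ∀ s, 0 ≤ fl s - fr s := by
    intro s
    by_cases hs : s ∈ Ioo t₁ t₂
    · have h := hsand s hs; linarith [h.1, h.2]
    · simp only [hfr_def, hfl_def, if_neg hs, sub_zero, le_refl]
  have hsubint : Integrable (fun s => fl s - fr s) (volume.restrict (Ioc t₁ t₂)) := by
    rw [intervalIntegrable_iff_integrableOn_Ioc_of_le h12] at hflint hfrint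
    exact hflint.sub hfrint
  have hdiff0 : ∫ s in Ioc t₁ t₂, (fl s - fr s) ∂volume = 0 := by
    rw [← intervalIntegral.integral_of_le h12]
    rw [intervalIntegral.integral_sub hflint hfrint]
    · rw [hFTC1, hFTC2]; ring
  have hae : (fun s => fl s - fr s) =ᵐ[volume.restrict (Ioc t₁ t₂)] 0 :=
    (integral_eq_zero_iff_of_nonneg_ae (ae_of_all _ hnonneg) hsubint).1 hdiff0
  -- conclusion
  have hqae : ∀ᵐ s ∂(volume : Measure ℝ), s ∈ Set.uIoc t₁ t₂ → qmom ρ u₀ τ x s = fr s := by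
    have hne2 : ∀ᵐ s ∂(volume : Measure ℝ), s ≠ t₂ := by
      have hset : {a : ℝ | ¬ a ≠ t₂} = {t₂} := by ext a; simp
      rw [ae_iff, hset]
      exact measure_singleton t₂
    have hae' := (ae_restrict_iff' measurableSet_Ioc).1 hae
    filter_upwards [hne2, hae'] with s hs1 hs2 hsI
    rw [uIoc_of_le h12] at hsI
    have hIoo : s ∈ Ioo t₁ t₂ := ⟨hsI.1, lt_of_le_of_ne hsI.2 hs1⟩
    have h3 := hsand s hIoo
    have h4 := hs2 hsI
    simp only [Pi.zero_apply] at h4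
    linarith [h3.1, h3.2]
  calc ∫ s in t₁..t₂, qmom ρ u₀ τ x s = ∫ s in t₁..t₂, fr s :=
        intervalIntegral.integral_congr_ae hqae
    _ = G t₂ - G t₁ := hFTC1
end

section
/- Assume ρ₀ ≠ 0 and that S̄(x,t) ∩ supp ρ₀ is nonempty for every x ∈ ℝ and t > 0. Then for every x ∈ ℝ and t > 0: q̄(x,t) = −(1/2)·m̄(x,t)² + (M/2)·m̄(x,t). -/
open MeasureTheory Set Filter Topology

/-- The drift potential `F̄(y;x,t)`. -/
noncomputable def Fbar (ρ : Measure ℝ) (y x t : ℝ) : ℝ :=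
  ∫ η in Set.Iio y, (η - t * mtilde ρ η - x) ∂ρ

/-- The right-limit value `F̄(y+;x,t)` (integral over `(−∞,y]`). -/
noncomputable def FbarP (ρ : Measure ℝ) (y x t : ℝ) : ℝ :=
  ∫ η in Set.Iic y, (η - t * mtilde ρ η - x) ∂ρ

/-- `ν̄(x,t) = inf_y F̄(y;x,t)`. -/
noncomputable def nuBar (ρ : Measure ℝ) (x t : ℝ) : ℝ := ⨅ y : ℝ, Fbar ρ y x t

/-- `S̄(x,t)`. -/
def SBar (ρ : Measure ℝ) (x t : ℝ) : Set ℝ :=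
  {y | ∃ yn : ℕ → ℝ, Tendsto yn atTop (𝓝 y) ∧
    Tendsto (fun n => Fbar ρ (yn n) x t) atTop (𝓝 (nuBar ρ x t))}

/-- `ȳ_*(x,t) = inf (S̄(x,t) ∩ supp ρ₀)`. -/
noncomputable def ybarStar (ρ : Measure ℝ) (x t : ℝ) : ℝ := sInf (SBar ρ x t ∩ msupp ρ)

/-- The mass `m̄(x,t)` of the drift equations. -/
noncomputable def mBar (ρ : Measure ℝ) (x t : ℝ) : ℝ :=
  if nuBar ρ x t = Fbar ρ (ybarStar ρ x t) x t then m0 ρ (ybarStar ρ x t)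
  else m0p ρ (ybarStar ρ x t)

/-- The momentum `q̄(x,t)` of the drift equations. -/
noncomputable def qBar (ρ : Measure ℝ) (x t : ℝ) : ℝ :=
  if nuBar ρ x t = Fbar ρ (ybarStar ρ x t) x t then
    -∫ η in Set.Iio (ybarStar ρ x t), mtilde ρ η ∂ρ
  else
    -∫ η in Set.Iic (ybarStar ρ x t), mtilde ρ η ∂ρ

lemma aux_lint (μ : Measure ℝ) [IsFiniteMeasure μ] :
    ∫⁻ η, μ (Set.Iio η) ∂μ + ∫⁻ η, μ (Set.Iic η) ∂μ = μ Set.univ * μ Set.univ := by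
  have hlt : MeasurableSet {p : ℝ × ℝ | p.2 < p.1} :=
    measurableSet_lt measurable_snd measurable_fst
  have hlt' : MeasurableSet {p : ℝ × ℝ | p.1 < p.2} :=
    measurableSet_lt measurable_fst measurable_snd
  have hle : MeasurableSet {p : ℝ × ℝ | p.2 ≤ p.1} :=
    measurableSet_le measurable_snd measurable_fst
  have h1 : ∫⁻ η, μ (Set.Iio η) ∂μ = (μ.prod μ) {p : ℝ × ℝ | p.2 < p.1} := by
    rw [Measure.prod_apply hlt]; rfl
  have h2 : ∫⁻ η, μ (Set.Iic η) ∂μ = (μ.prod μ) {p : ℝ × ℝ | p.2 ≤ p.1} := by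
    rw [Measure.prod_apply hle]; rfl
  have hsym : (μ.prod μ) {p : ℝ × ℝ | p.1 < p.2} = (μ.prod μ) {p : ℝ × ℝ | p.2 < p.1} := by
    conv_lhs => rw [← Measure.prod_swap (μ := μ) (ν := μ)]
    rw [Measure.map_apply measurable_swap hlt']
    rfl
  have hcompl : {p : ℝ × ℝ | p.2 ≤ p.1} = {p : ℝ × ℝ | p.1 < p.2}ᶜ := by
    ext p; simp [not_lt]
  have htot : (μ.prod μ) Set.univ = μ Set.univ * μ Set.univ := by
    rw [← Set.univ_prod_univ, Measure.prod_prod]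
  rw [h1, h2, hcompl, measure_compl hlt' (measure_ne_top _ _), hsym]
  rw [add_comm, tsub_add_cancel_of_le (measure_mono (Set.subset_univ _)), htot]

lemma aux_meas_Iio (μ : Measure ℝ) : Measurable fun η : ℝ => μ (Set.Iio η) := by
  have : Monotone fun η : ℝ => μ (Set.Iio η) :=
    fun a b hab => measure_mono (Set.Iio_subset_Iio hab)
  exact this.measurable

lemma aux_meas_Iic (μ : Measure ℝ) : Measurable fun η : ℝ => μ (Set.Iic η) := by
  have : Monotone fun η : ℝ => μ (Set.Iic η) :=
    fun a b hab => measure_mono (Set.Iic_subset_Iic.2 hab)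
  exact this.measurable

lemma aux_int (μ : Measure ℝ) [IsFiniteMeasure μ] :
    ∫ η, ((μ (Set.Iio η)).toReal + (μ (Set.Iic η)).toReal) ∂μ
      = ((μ Set.univ).toReal) ^ 2 := by
  have hm1 := aux_meas_Iio μ
  have hm2 := aux_meas_Iic μ
  have hcongr : ∀ η : ℝ, (μ (Set.Iio η)).toReal + (μ (Set.Iic η)).toReal
      = (μ (Set.Iio η) + μ (Set.Iic η)).toReal := fun η =>
    (ENNReal.toReal_add (measure_ne_top _ _) (measure_ne_top _ _)).symm
  simp_rw [hcongr]
  rw [integral_toReal (f := fun η => μ (Set.Iio η) + μ (Set.Iic η)) ((hm1.add hm2).aemeasurable)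
    (ae_of_all _ fun η => ENNReal.add_lt_top.2 ⟨measure_lt_top _ _, measure_lt_top _ _⟩)]
  rw [lintegral_add_left hm1, aux_lint, ENNReal.toReal_mul, sq]

lemma aux_integrable_mono (ρ : Measure ℝ) [IsFiniteMeasure ρ] {f : ℝ → Set ℝ}
    (hmono : Monotone fun y => ρ (f y)) (s : Set ℝ) :
    Integrable (fun η => (ρ (f η)).toReal) (ρ.restrict s) := by
  have hmeas : Measurable fun η => (ρ (f η)).toReal :=
    (hmono.measurable).ennreal_toReal
  refine (integrable_const (Mtot ρ)).mono' hmeas.aestronglyMeasurable ?_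
  refine ae_of_all _ fun η => ?_
  rw [Real.norm_eq_abs, abs_of_nonneg ENNReal.toReal_nonneg]
  exact ENNReal.toReal_mono (measure_ne_top _ _) (measure_mono (Set.subset_univ _))

lemma aux_set (ρ : Measure ℝ) [IsFiniteMeasure ρ] (s : Set ℝ) (hs : MeasurableSet s)
    (hlow : ∀ η ∈ s, Set.Iic η ⊆ s) :
    ∫ η in s, mtilde ρ η ∂ρ = (((ρ s).toReal) ^ 2 - Mtot ρ * (ρ s).toReal) / 2 := by
  set μ := ρ.restrict s with hμ
  have h0 : ∀ᵐ η ∂μ, η ∈ s := ae_restrict_mem hs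
  have hcongr : ∀ᵐ η ∂μ, m0 ρ η + m0p ρ η
      = (μ (Set.Iio η)).toReal + (μ (Set.Iic η)).toReal := by
    filter_upwards [h0] with η hη
    have h1 : μ (Set.Iio η) = ρ (Set.Iio η) := by
      rw [hμ, Measure.restrict_apply measurableSet_Iio,
        Set.inter_eq_left.2 ((Set.Iio_subset_Iic_self).trans (hlow η hη))]
    have h2 : μ (Set.Iic η) = ρ (Set.Iic η) := by
      rw [hμ, Measure.restrict_apply measurableSet_Iic, Set.inter_eq_left.2 (hlow η hη)]
    simp [m0, m0p, h1, h2]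
  have hsum : ∫ η in s, (m0 ρ η + m0p ρ η) ∂ρ = ((ρ s).toReal) ^ 2 := by
    have := integral_congr_ae hcongr
    rw [show (∫ η in s, (m0 ρ η + m0p ρ η) ∂ρ) = ∫ η, (m0 ρ η + m0p ρ η) ∂μ from rfl, this,
      aux_int μ, hμ, Measure.restrict_apply_univ]
  have hint1 : Integrable (fun η => m0 ρ η) μ :=
    aux_integrable_mono ρ (fun a b hab => measure_mono (Set.Iio_subset_Iio hab)) s
  have hint2 : Integrable (fun η => m0p ρ η) μ :=
    aux_integrable_mono ρ (fun a b hab => measure_mono (Set.Iic_subset_Iic.2 hab)) s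
  have hconst : ∫ η in s, Mtot ρ ∂ρ = (ρ s).toReal * Mtot ρ := by
    rw [setIntegral_const, smul_eq_mul]; rfl
  calc ∫ η in s, mtilde ρ η ∂ρ
      = (∫ η in s, ((m0 ρ η + m0p ρ η) - Mtot ρ) ∂ρ) / 2 := by
        rw [← integral_div]; rfl
    _ = ((∫ η in s, (m0 ρ η + m0p ρ η) ∂ρ) - ∫ η in s, Mtot ρ ∂ρ) / 2 := by
        rw [integral_sub (show Integrable (fun η => m0 ρ η + m0p ρ η) μ from hint1.add hint2)
          (integrable_const _)]
    _ = (((ρ s).toReal) ^ 2 - Mtot ρ * (ρ s).toReal) / 2 := by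
        rw [hsum, hconst]; ring

theorem stmt15 (ρ : Measure ℝ) [IsFiniteMeasure ρ] (hρ : ρ ≠ 0)
    (hmom : Integrable (fun η : ℝ => η) ρ)
    (hne : ∀ x t : ℝ, 0 < t → (SBar ρ x t ∩ msupp ρ).Nonempty) :
    ∀ x t : ℝ, 0 < t →
      qBar ρ x t = -(1 / 2) * (mBar ρ x t) ^ 2 + Mtot ρ / 2 * mBar ρ x t := by
  intro x t ht
  unfold qBar mBar
  split_ifs with h
  · rw [aux_set ρ (Set.Iio (ybarStar ρ x t)) measurableSet_Iio
      (fun η hη ξ hξ => Set.mem_Iio.2 (lt_of_le_of_lt (Set.mem_Iic.1 hξ) (Set.mem_Iio.1 hη)))]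
    unfold m0; ring
  · rw [aux_set ρ (Set.Iic (ybarStar ρ x t)) measurableSet_Iic
      (fun η hη ξ hξ => Set.mem_Iic.2 (le_trans (Set.mem_Iic.1 hξ) (Set.mem_Iic.1 hη)))]
    unfold m0p; ring
end

section
/- Assume ρ₀ ≠ 0 and that S̄(x,t) ∩ supp ρ₀ is nonempty for every x ∈ ℝ and t > 0. Then: (i) for each t > 0 the function x ↦ ν̄(x,t) is Lipschitz with |ν̄(x₁,t) − ν̄(x₂,t)| ≤ M·|x₁ − x₂|, and for all x₁ ≤ x₂, ∫_{x₁}^{x₂} m̄(x,t) dx = ν̄(x₁,t) − ν̄(x₂,t); (ii) for each x ∈ ℝ and all 0 < t₁ ≤ t₂, ∫_{t₁}^{t₂} q̄(x,t) dt = ν̄(x,t₂) − ν̄(x,t₁). -/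
open MeasureTheory Set Filter Topology

set_option linter.unusedSectionVars false
set_option linter.unusedVariables false
set_option linter.unusedTactic false
set_option maxHeartbeats 1000000

section Basic
variable (ρ : Measure ℝ) [IsFiniteMeasure ρ]

lemma toReal_mono' {s t : Set ℝ} (h : s ⊆ t) : (ρ s).toReal ≤ (ρ t).toReal :=
  ENNReal.toReal_mono (measure_ne_top ρ t) (measure_mono h)

lemma m0_nonneg (y : ℝ) : 0 ≤ m0 ρ y := ENNReal.toReal_nonneg
lemma m0p_nonneg (y : ℝ) : 0 ≤ m0p ρ y := ENNReal.toReal_nonneg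
lemma m0_le_m0p (y : ℝ) : m0 ρ y ≤ m0p ρ y := toReal_mono' ρ Iio_subset_Iic_self
lemma m0_le_Mtot (y : ℝ) : m0 ρ y ≤ Mtot ρ := toReal_mono' ρ (subset_univ _)
lemma m0p_le_Mtot (y : ℝ) : m0p ρ y ≤ Mtot ρ := toReal_mono' ρ (subset_univ _)
lemma m0_mono : Monotone (m0 ρ) := fun a b h => toReal_mono' ρ (Iio_subset_Iio h)
lemma m0p_mono : Monotone (m0p ρ) := fun a b h => toReal_mono' ρ (Iic_subset_Iic.2 h)

lemma mtilde_abs_le (y : ℝ) : |mtilde ρ y| ≤ Mtot ρ / 2 := by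
  have h1 := m0_nonneg ρ y
  have h2 := m0p_nonneg ρ y
  have h3 := m0_le_Mtot ρ y
  have h4 := m0p_le_Mtot ρ y
  rw [abs_le]; constructor <;> simp only [mtilde] <;> nlinarith

lemma measurable_mtilde : Measurable (mtilde ρ) := by
  have h1 : Measurable (m0 ρ) := (m0_mono ρ).measurable
  have h2 : Measurable (m0p ρ) := (m0p_mono ρ).measurable
  exact ((h1.add h2).sub measurable_const).div_const 2

lemma integrable_mtilde : Integrable (mtilde ρ) ρ := by
  refine Integrable.mono' (integrable_const (Mtot ρ / 2)) (measurable_mtilde ρ).aestronglyMeasurable ?_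
  exact Filter.Eventually.of_forall fun y => by
    simpa [Real.norm_eq_abs] using mtilde_abs_le ρ y

end Basic

section Basic2
variable (ρ : Measure ℝ) [IsFiniteMeasure ρ]

lemma integrable_f (hmom : Integrable (fun η : ℝ => η) ρ) (x t : ℝ) :
    Integrable (fun η : ℝ => η - t * mtilde ρ η - x) ρ :=
  (hmom.sub ((integrable_mtilde ρ).const_mul t)).sub (integrable_const x)

-- affine decomposition
lemma Fbar_eq (hmom : Integrable (fun η : ℝ => η) ρ) (y x t : ℝ) :
    Fbar ρ y x t = (∫ η in Set.Iio y, η ∂ρ) - t * (∫ η in Set.Iio y, mtilde ρ η ∂ρ)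
      - x * m0 ρ y := by
  have h1 : Integrable (fun η : ℝ => η) (ρ.restrict (Iio y)) := hmom.restrict
  have h2 : Integrable (fun η : ℝ => t * mtilde ρ η) (ρ.restrict (Iio y)) :=
    ((integrable_mtilde ρ).const_mul t).restrict
  have h12 : Integrable (fun η : ℝ => η - t * mtilde ρ η) (ρ.restrict (Iio y)) := h1.sub h2
  rw [Fbar, integral_sub h12 (integrable_const x), integral_sub h1 h2,
    integral_const, integral_const_mul]
  simp [Measure.real, Measure.restrict_apply_univ, m0, smul_eq_mul, mul_comm]

lemma FbarP_eq (hmom : Integrable (fun η : ℝ => η) ρ) (y x t : ℝ) :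
    FbarP ρ y x t = (∫ η in Set.Iic y, η ∂ρ) - t * (∫ η in Set.Iic y, mtilde ρ η ∂ρ)
      - x * m0p ρ y := by
  have h1 : Integrable (fun η : ℝ => η) (ρ.restrict (Iic y)) := hmom.restrict
  have h2 : Integrable (fun η : ℝ => t * mtilde ρ η) (ρ.restrict (Iic y)) :=
    ((integrable_mtilde ρ).const_mul t).restrict
  have h12 : Integrable (fun η : ℝ => η - t * mtilde ρ η) (ρ.restrict (Iic y)) := h1.sub h2
  rw [FbarP, integral_sub h12 (integrable_const x), integral_sub h1 h2,
    integral_const, integral_const_mul]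
  simp [Measure.real, Measure.restrict_apply_univ, m0p, smul_eq_mul, mul_comm]

-- uniform bound
lemma abs_setIntegral_le (hmom : Integrable (fun η : ℝ => η) ρ) (s : Set ℝ) (x t : ℝ) :
    |∫ η in s, (η - t * mtilde ρ η - x) ∂ρ| ≤ ∫ η, |η - t * mtilde ρ η - x| ∂ρ := by
  have h := norm_integral_le_integral_norm (μ := ρ.restrict s) (fun η : ℝ => η - t * mtilde ρ η - x)
  simp only [Real.norm_eq_abs] at h
  refine le_trans h ?_
  refine integral_mono_measure Measure.restrict_le_self ?_ (integrable_f ρ hmom x t).abs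
  exact Filter.Eventually.of_forall fun η => abs_nonneg _

lemma bddBelow_Fbar (hmom : Integrable (fun η : ℝ => η) ρ) (x t : ℝ) :
    BddBelow (Set.range fun y => Fbar ρ y x t) := by
  refine ⟨-∫ η, |η - t * mtilde ρ η - x| ∂ρ, ?_⟩
  rintro v ⟨y, rfl⟩
  have := abs_setIntegral_le ρ hmom (Iio y) x t
  rw [abs_le] at this
  exact this.1

lemma nuBar_le (hmom : Integrable (fun η : ℝ => η) ρ) (x t y : ℝ) : nuBar ρ x t ≤ Fbar ρ y x t :=
  ciInf_le (bddBelow_Fbar ρ hmom x t) y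

end Basic2

section DCT
variable (ρ : Measure ℝ) [IsFiniteMeasure ρ]

lemma tendsto_setIntegral_Iio (F : ℝ → ℝ) (hF : Integrable F ρ) (c : ℝ) (yn : ℕ → ℝ)
    (hy : Tendsto yn atTop (𝓝 c)) (hle : ∀ n, yn n ≤ c) :
    Tendsto (fun n => ∫ η in Iio (yn n), F η ∂ρ) atTop (𝓝 (∫ η in Iio c, F η ∂ρ)) := by
  have heq : ∀ n, (∫ η in Iio (yn n), F η ∂ρ) = ∫ η, (Iio (yn n)).indicator F η ∂ρ :=
    fun n => (integral_indicator measurableSet_Iio).symm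
  have heqc : (∫ η in Iio c, F η ∂ρ) = ∫ η, (Iio c).indicator F η ∂ρ :=
    (integral_indicator measurableSet_Iio).symm
  simp only [heq, heqc]
  refine tendsto_integral_of_dominated_convergence (fun η => |F η|)
    (fun n => (hF.aestronglyMeasurable.indicator measurableSet_Iio)) hF.abs ?_ ?_
  · intro n
    refine Filter.Eventually.of_forall fun η => ?_
    simpa [Real.norm_eq_abs] using norm_indicator_le_norm_self F η (s := Iio (yn n))
  · refine Filter.Eventually.of_forall fun η => ?_
    by_cases hη : η < c
    · have hev : ∀ᶠ n in atTop, (Iio (yn n)).indicator F η = (Iio c).indicator F η := by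
        filter_upwards [hy.eventually (lt_mem_nhds hη)] with n hn
        simp [Set.indicator_of_mem, hn, hη]
    
      exact Tendsto.congr' (hev.mono fun n h => h.symm) tendsto_const_nhds
    · have : ∀ n, (Iio (yn n)).indicator F η = (Iio c).indicator F η := by
        intro n
        have h1 : η ∉ Iio (yn n) := fun h => hη (lt_of_lt_of_le h (hle n))
        have h2 : η ∉ Iio c := hη
        simp [Set.indicator_of_notMem, h1, h2]
      simp only [this]
      exact tendsto_const_nhds

lemma tendsto_setIntegral_Iic (F : ℝ → ℝ) (hF : Integrable F ρ) (c : ℝ) (yn : ℕ → ℝ)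
    (hy : Tendsto yn atTop (𝓝 c)) (hgt : ∀ n, c < yn n) :
    Tendsto (fun n => ∫ η in Iio (yn n), F η ∂ρ) atTop (𝓝 (∫ η in Iic c, F η ∂ρ)) := by
  have heq : ∀ n, (∫ η in Iio (yn n), F η ∂ρ) = ∫ η, (Iio (yn n)).indicator F η ∂ρ :=
    fun n => (integral_indicator measurableSet_Iio).symm
  have heqc : (∫ η in Iic c, F η ∂ρ) = ∫ η, (Iic c).indicator F η ∂ρ :=
    (integral_indicator measurableSet_Iic).symm
  simp only [heq, heqc]
  refine tendsto_integral_of_dominated_convergence (fun η => |F η|)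
    (fun n => (hF.aestronglyMeasurable.indicator measurableSet_Iio)) hF.abs ?_ ?_
  · intro n
    refine Filter.Eventually.of_forall fun η => ?_
    simpa [Real.norm_eq_abs] using norm_indicator_le_norm_self F η (s := Iio (yn n))
  · refine Filter.Eventually.of_forall fun η => ?_
    by_cases hη : η ≤ c
    · have : ∀ n, (Iio (yn n)).indicator F η = (Iic c).indicator F η := by
        intro n
        have h1 : η ∈ Iio (yn n) := lt_of_le_of_lt hη (hgt n)
        simp [Set.indicator_of_mem, h1, hη]
      simp only [this]; exact tendsto_const_nhds
    · push_neg at hη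
      have hev : ∀ᶠ n in atTop, (Iio (yn n)).indicator F η = (Iic c).indicator F η := by
        filter_upwards [hy.eventually (gt_mem_nhds hη)] with n hn
        have h1 : η ∉ Iio (yn n) := by simp [Iio]; linarith
        have h2 : η ∉ Iic c := by simp [Iic]; linarith
        simp [Set.indicator_of_notMem, h1, h2]
      exact Tendsto.congr' (hev.mono fun n h => h.symm) tendsto_const_nhds

lemma tendsto_setIntegral_Iic' (F : ℝ → ℝ) (hF : Integrable F ρ) (c : ℝ) (yn : ℕ → ℝ)
    (hy : Tendsto yn atTop (𝓝 c)) (hgt : ∀ n, c < yn n) :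
    Tendsto (fun n => ∫ η in Iic (yn n), F η ∂ρ) atTop (𝓝 (∫ η in Iic c, F η ∂ρ)) := by
  have heq : ∀ n, (∫ η in Iic (yn n), F η ∂ρ) = ∫ η, (Iic (yn n)).indicator F η ∂ρ :=
    fun n => (integral_indicator measurableSet_Iic).symm
  have heqc : (∫ η in Iic c, F η ∂ρ) = ∫ η, (Iic c).indicator F η ∂ρ :=
    (integral_indicator measurableSet_Iic).symm
  simp only [heq, heqc]
  refine tendsto_integral_of_dominated_convergence (fun η => |F η|)
    (fun n => (hF.aestronglyMeasurable.indicator measurableSet_Iic)) hF.abs ?_ ?_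
  · intro n
    refine Filter.Eventually.of_forall fun η => ?_
    simpa [Real.norm_eq_abs] using norm_indicator_le_norm_self F η (s := Iic (yn n))
  · refine Filter.Eventually.of_forall fun η => ?_
    by_cases hη : η ≤ c
    · have : ∀ n, (Iic (yn n)).indicator F η = (Iic c).indicator F η := by
        intro n
        have h1 : η ∈ Iic (yn n) := hη.trans (hgt n).le
        simp [Set.indicator_of_mem, h1, hη]
      simp only [this]; exact tendsto_const_nhds
    · push_neg at hη
      have hev : ∀ᶠ n in atTop, (Iic (yn n)).indicator F η = (Iic c).indicator F η := by
        filter_upwards [hy.eventually (gt_mem_nhds hη)] with n hn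
        have h1 : η ∉ Iic (yn n) := by simp [Iic]; linarith
        have h2 : η ∉ Iic c := by simp [Iic]; linarith
        simp [Set.indicator_of_notMem, h1, h2]
      exact Tendsto.congr' (hev.mono fun n h => h.symm) tendsto_const_nhds

end DCT

lemma lemA (g h : ℝ → ℝ) (a b : ℝ) (hab : a ≤ b)
    (hsupp : ∀ u ∈ Icc a b, ∀ v ∈ Icc a b, g v ≤ g u + h u * (v - u)) :
    (∫ x in a..b, h x) = g b - g a := by
  -- antitone
  have hanti : AntitoneOn h (Icc a b) := by
    intro u hu v hv huv
    rcases eq_or_lt_of_le huv with rfl | hlt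
    · exact le_rfl
    · have h1 := hsupp u hu v hv
      have h2 := hsupp v hv u hu
      nlinarith [sub_pos.2 hlt]
  have hint : IntervalIntegrable h volume a b := by
    have : AntitoneOn h (uIcc a b) := by rwa [uIcc_of_le hab]
    exact this.intervalIntegrable
  -- the squeeze
  have key : ∀ n : ℕ, 0 < n →
      |(∫ x in a..b, h x) - (g b - g a)| ≤ (h a - h b) * ((b - a) / n) := by
    intro n hn
    set Δ : ℝ := (b - a) / n with hΔ
    have hΔ0 : 0 ≤ Δ := div_nonneg (by linarith) (Nat.cast_nonneg n)
    set u : ℕ → ℝ := fun i => a + i * Δ with hu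
    have hu0 : u 0 = a := by simp [hu]
    have hun : u n = b := by
      simp only [hu, hΔ]
      rw [mul_div_assoc', mul_div_cancel_left₀ _ (by exact_mod_cast hn.ne' : (n:ℝ) ≠ 0)]; ring
    have hustep : ∀ i, u (i + 1) = u i + Δ := by
      intro i; simp [hu]; push_cast; ring
    have humem : ∀ i ≤ n, u i ∈ Icc a b := by
      intro i hi
      constructor
      · simp [hu]; positivity
      · have : (i : ℝ) * Δ ≤ (n : ℝ) * Δ := by
          apply mul_le_mul_of_nonneg_right _ hΔ0
          exact_mod_cast hi
        have hnΔ : (n : ℝ) * Δ = b - a := by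
          rw [hΔ, mul_div_assoc', mul_div_cancel_left₀ _ (by exact_mod_cast hn.ne' : (n:ℝ) ≠ 0)]
        simp only [hu]; linarith
    have humono : ∀ i, u i ≤ u (i + 1) := fun i => by rw [hustep]; linarith
    -- integrability on pieces
    have hpint : ∀ i < n, IntervalIntegrable h volume (u i) (u (i + 1)) := by
      intro i hi
      refine hint.mono_set ?_
      rw [uIcc_of_le (humono i), uIcc_of_le hab]
      exact Icc_subset_Icc (humem i hi.le).1 (humem (i+1) hi).2
    have hsum_int : (∫ x in a..b, h x) = ∑ i ∈ Finset.range n, ∫ x in (u i)..(u (i+1)), h x := by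
      rw [← hu0, ← hun]
      exact (intervalIntegral.sum_integral_adjacent_intervals hpint).symm
    have hsum_g : g b - g a = ∑ i ∈ Finset.range n, (g (u (i+1)) - g (u i)) := by
      rw [Finset.sum_range_sub (fun i => g (u i)), hu0, hun]
    -- piece bounds
    have hpiece : ∀ i < n,
        |(∫ x in (u i)..(u (i+1)), h x) - (g (u (i+1)) - g (u i))|
          ≤ (h (u i) - h (u (i+1))) * Δ := by
      intro i hi
      have hmem1 := humem i hi.le
      have hmem2 := humem (i+1) hi
      have hsubset : Icc (u i) (u (i+1)) ⊆ Icc a b := Icc_subset_Icc hmem1.1 hmem2.2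
      have e1 : u (i+1) - u i = Δ := by rw [hustep]; ring
      have e2 : u i - u (i+1) = -Δ := by rw [hustep]; ring
      have hIub : (∫ x in (u i)..(u (i+1)), h x) ≤ h (u i) * Δ := by
        have := intervalIntegral.integral_mono_on (μ := volume) (humono i) (hpint i hi)
          (_root_.intervalIntegrable_const (c := h (u i)))
          (fun x hx => hanti hmem1 (hsubset hx) hx.1)
        rw [intervalIntegral.integral_const, e1] at this
        simpa [smul_eq_mul, mul_comm] using this
      have hIlb : h (u (i+1)) * Δ ≤ ∫ x in (u i)..(u (i+1)), h x := by
        have := intervalIntegral.integral_mono_on (μ := volume) (humono i)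
          (_root_.intervalIntegrable_const (c := h (u (i+1)))) (hpint i hi)
          (fun x hx => hanti (hsubset hx) hmem2 hx.2)
        rw [intervalIntegral.integral_const, e1] at this
        simpa [smul_eq_mul, mul_comm] using this
      have hgub : g (u (i+1)) - g (u i) ≤ h (u i) * Δ := by
        have hs := hsupp (u i) hmem1 (u (i+1)) hmem2
        rw [e1] at hs; linarith
      have hglb : h (u (i+1)) * Δ ≤ g (u (i+1)) - g (u i) := by
        have hs := hsupp (u (i+1)) hmem2 (u i) hmem1
        rw [e2, mul_neg] at hs; linarith
      rw [abs_le]; constructor <;> nlinarith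
    calc |(∫ x in a..b, h x) - (g b - g a)|
        = |∑ i ∈ Finset.range n, ((∫ x in (u i)..(u (i+1)), h x) - (g (u (i+1)) - g (u i)))| := by
          rw [hsum_int, hsum_g]
          congr 1
          rw [← Finset.sum_sub_distrib]
      _ ≤ ∑ i ∈ Finset.range n, |(∫ x in (u i)..(u (i+1)), h x) - (g (u (i+1)) - g (u i))| :=
          Finset.abs_sum_le_sum_abs _ _
      _ ≤ ∑ i ∈ Finset.range n, (h (u i) - h (u (i+1))) * Δ := by
          refine Finset.sum_le_sum fun i hi => hpiece i (Finset.mem_range.1 hi)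
      _ = (h a - h b) * Δ := by
          rw [← Finset.sum_mul, Finset.sum_range_sub' (fun i => h (u i)), hu0, hun]
  -- conclude
  have habs : |(∫ x in a..b, h x) - (g b - g a)| = 0 := by
    by_contra hc
    have hpos : 0 < |(∫ x in a..b, h x) - (g b - g a)| :=
      lt_of_le_of_ne (abs_nonneg _) (Ne.symm hc)
    set ε := |(∫ x in a..b, h x) - (g b - g a)|
    have hC : 0 ≤ (h a - h b) * (b - a) := by
      have : h b ≤ h a := hanti ⟨le_refl a, hab⟩ ⟨hab, le_refl b⟩ hab
      nlinarith
    obtain ⟨n, hn⟩ := exists_nat_gt ((h a - h b) * (b - a) / ε)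
    have hn0 : 0 < n := by
      by_contra h0
      push_neg at h0
      interval_cases n
      simp at hn
      nlinarith [div_nonneg hC hpos.le]
    have := key n hn0
    rw [div_lt_iff₀ hpos] at hn
    have hεn : (h a - h b) * ((b - a) / n) < ε := by
      rw [mul_div_assoc'] at *
      rw [div_lt_iff₀ (by exact_mod_cast hn0 : (0:ℝ) < n)]
      nlinarith
    linarith
  have := abs_eq_zero.1 habs
  linarith
section SMach
variable (ρ : Measure ℝ) [IsFiniteMeasure ρ]

lemma closure_SBar_subset (x t : ℝ) : closure (SBar ρ x t) ⊆ SBar ρ x t := by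
  intro z hz
  rw [mem_closure_iff_seq_limit] at hz
  obtain ⟨zk, hzk, hzklim⟩ := hz
  have hch : ∀ k : ℕ, ∃ w : ℝ, dist w (zk k) < 1/(k+1) ∧
      dist (Fbar ρ w x t) (nuBar ρ x t) < 1/(k+1) := by
    intro k
    obtain ⟨yn, h1, h2⟩ := hzk k
    have hε : (0:ℝ) < 1/(k+1) := by positivity
    obtain ⟨N1, hN1⟩ := (Metric.tendsto_atTop.mp h1) _ hε
    obtain ⟨N2, hN2⟩ := (Metric.tendsto_atTop.mp h2) _ hε
    exact ⟨yn (max N1 N2), hN1 _ (le_max_left _ _), hN2 _ (le_max_right _ _)⟩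
  choose w hw1 hw2 using hch
  have hzero : Tendsto (fun k : ℕ => (1:ℝ)/(k+1)) atTop (𝓝 0) :=
    tendsto_one_div_add_atTop_nhds_zero_nat
  refine ⟨w, ?_, ?_⟩
  · rw [tendsto_iff_dist_tendsto_zero]
    refine squeeze_zero (g := fun k : ℕ => 1/((k:ℝ)+1) + dist (zk k) z) (fun k => dist_nonneg) (fun k => ?_) ?_
    · refine (dist_triangle (w k) (zk k) z).trans ?_
      have := (hw1 k).le
      linarith
    · have hd : Tendsto (fun k => dist (zk k) z) atTop (𝓝 0) :=
        tendsto_iff_dist_tendsto_zero.mp hzklim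
      simpa using hzero.add hd
  · rw [tendsto_iff_dist_tendsto_zero]
    refine squeeze_zero (fun k => dist_nonneg) (fun k => (hw2 k).le) hzero

lemma SBar_val (hmom : Integrable (fun η : ℝ => η) ρ) (x t : ℝ) {y : ℝ}
    (hy : y ∈ SBar ρ x t) :
    nuBar ρ x t = Fbar ρ y x t ∨ nuBar ρ x t = FbarP ρ y x t := by
  obtain ⟨yn, h1, h2⟩ := hy
  by_cases hev : ∀ᶠ n in atTop, y < yn n
  · right
    obtain ⟨φ, hφ, hφP⟩ := Filter.extraction_of_frequently_atTop hev.frequently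
    have hlim : Tendsto (fun n => yn (φ n)) atTop (𝓝 y) := h1.comp hφ.tendsto_atTop
    have hFlim : Tendsto (fun n => Fbar ρ (yn (φ n)) x t) atTop (𝓝 (nuBar ρ x t)) :=
      h2.comp hφ.tendsto_atTop
    have hF2 := tendsto_setIntegral_Iic ρ (fun η => η - t * mtilde ρ η - x)
      (integrable_f ρ hmom x t) y (fun n => yn (φ n)) hlim hφP
    exact tendsto_nhds_unique hFlim hF2
  · left
    have hfreq : ∃ᶠ n in atTop, yn n ≤ y := by
      have := Filter.not_eventually.mp hev
      exact this.mono fun n hn => not_lt.mp hn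
    obtain ⟨φ, hφ, hφP⟩ := Filter.extraction_of_frequently_atTop hfreq
    have hlim : Tendsto (fun n => yn (φ n)) atTop (𝓝 y) := h1.comp hφ.tendsto_atTop
    have hFlim : Tendsto (fun n => Fbar ρ (yn (φ n)) x t) atTop (𝓝 (nuBar ρ x t)) :=
      h2.comp hφ.tendsto_atTop
    have hF2 := tendsto_setIntegral_Iio ρ (fun η => η - t * mtilde ρ η - x)
      (integrable_f ρ hmom x t) y (fun n => yn (φ n)) hlim hφP
    exact tendsto_nhds_unique hFlim hF2

lemma nuBar_le_FbarP (hmom : Integrable (fun η : ℝ => η) ρ) (x t y : ℝ) :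
    nuBar ρ x t ≤ FbarP ρ y x t := by
  have hyn : Tendsto (fun n : ℕ => y + 1/(n+1)) atTop (𝓝 y) := by
    have h0 : Tendsto (fun n : ℕ => (1:ℝ)/(n+1)) atTop (𝓝 0) :=
      tendsto_one_div_add_atTop_nhds_zero_nat
    simpa using (tendsto_const_nhds (x := y)).add h0
  have hgt : ∀ n : ℕ, y < y + 1/(n+1) := fun n => by
    have : (0:ℝ) < 1/(n+1) := by positivity
    linarith
  have hF := tendsto_setIntegral_Iic ρ (fun η => η - t * mtilde ρ η - x)
    (integrable_f ρ hmom x t) y _ hyn hgt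
  exact ge_of_tendsto hF (Filter.Eventually.of_forall fun n => nuBar_le ρ hmom x t _)

lemma tendsto_G_zero (hmom : Integrable (fun η : ℝ => η) ρ) (x t : ℝ) :
    Tendsto (fun k : ℕ => ∫ η in Iio (-(k:ℝ)), |η - t * mtilde ρ η - x| ∂ρ)
      atTop (𝓝 0) := by
  have heq : ∀ k : ℕ, (∫ η in Iio (-(k:ℝ)), |η - t * mtilde ρ η - x| ∂ρ)
      = ∫ η, (Iio (-(k:ℝ))).indicator (fun η => |η - t * mtilde ρ η - x|) η ∂ρ :=
    fun k => (integral_indicator measurableSet_Iio).symm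
  simp only [heq]
  have h0 : (0:ℝ) = ∫ η, (0:ℝ) ∂ρ := by simp
  rw [h0]
  refine tendsto_integral_of_dominated_convergence (fun η => |η - t * mtilde ρ η - x|)
    (fun k => ((integrable_f ρ hmom x t).abs.aestronglyMeasurable.indicator measurableSet_Iio))
    (integrable_f ρ hmom x t).abs ?_ ?_
  · intro k
    refine Filter.Eventually.of_forall fun η => ?_
    simpa [Real.norm_eq_abs, abs_abs] using
      norm_indicator_le_norm_self (fun η => |η - t * mtilde ρ η - x|) η (s := Iio (-(k:ℝ)))
  · refine Filter.Eventually.of_forall fun η => ?_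
    have hev : ∀ᶠ k : ℕ in atTop, (Iio (-(k:ℝ))).indicator
        (fun η => |η - t * mtilde ρ η - x|) η = 0 := by
      obtain ⟨K, hK⟩ := exists_nat_gt (-η)
      filter_upwards [eventually_ge_atTop K] with k hk
      have : ¬ η < -(k:ℝ) := by
        push_neg
        have : (K:ℝ) ≤ (k:ℝ) := by exact_mod_cast hk
        linarith
      simp [Set.indicator_of_notMem, this]
    exact Tendsto.congr' (hev.mono fun n h => h.symm) tendsto_const_nhds

lemma bddBelow_T (hmom : Integrable (fun η : ℝ => η) ρ) (x t : ℝ) (ht : 0 < t) :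
    BddBelow (SBar ρ x t ∩ msupp ρ) := by
  by_cases hA : ∃ L, ρ (Iio L) = 0
  · obtain ⟨L, hL⟩ := hA
    refine ⟨L, fun y hy => ?_⟩
    by_contra hyL
    push_neg at hyL
    have := hy.2 (Iio L) (Iio_mem_nhds hyL)
    rw [hL] at this
    exact lt_irrefl 0 this
  · push_neg at hA
    set y₀ := x - t * (Mtot ρ) / 2 - 1 with hy₀
    set ε := (ρ (Iio y₀)).toReal with hε'
    have hε : 0 < ε := ENNReal.toReal_pos (hA y₀) (measure_ne_top ρ _)
    have hFy0 : Fbar ρ y₀ x t ≤ -ε := by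
      have hmono : ∀ η ∈ Iio y₀, η - t * mtilde ρ η - x ≤ -1 := by
        intro η hη
        have habs := abs_le.mp (mtilde_abs_le ρ η)
        have hprod : 0 ≤ t * (mtilde ρ η + Mtot ρ / 2) :=
          mul_nonneg ht.le (by linarith [habs.1])
        have : η < y₀ := hη
        rw [hy₀] at this
        nlinarith
      have hle := setIntegral_mono_on ((integrable_f ρ hmom x t).restrict)
        (integrable_const (-1 : ℝ)).restrict measurableSet_Iio hmono
      rw [setIntegral_const] at hle
      simp only [smul_eq_mul, mul_neg_one] at hle
      exact le_trans hle le_rfl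
    have hν : nuBar ρ x t ≤ -ε := (nuBar_le ρ hmom x t y₀).trans hFy0
    obtain ⟨k₀, hk₀⟩ := ((tendsto_G_zero ρ hmom x t).eventually
      (eventually_lt_nhds hε)).exists
    refine ⟨-(k₀:ℝ), fun y hy => ?_⟩
    by_contra hyY
    push_neg at hyY
    have habs_int : ∀ s : Set ℝ, MeasurableSet s → s ⊆ Iio (-(k₀:ℝ)) →
        |∫ η in s, (η - t * mtilde ρ η - x) ∂ρ| < ε := by
      intro s hs hsub
      have h1 : |∫ η in s, (η - t * mtilde ρ η - x) ∂ρ|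
          ≤ ∫ η in s, |η - t * mtilde ρ η - x| ∂ρ := by
        have := norm_integral_le_integral_norm (μ := ρ.restrict s)
          (fun η : ℝ => η - t * mtilde ρ η - x)
        simpa [Real.norm_eq_abs] using this
      have h2 : (∫ η in s, |η - t * mtilde ρ η - x| ∂ρ)
          ≤ ∫ η in Iio (-(k₀:ℝ)), |η - t * mtilde ρ η - x| ∂ρ := by
        refine integral_mono_measure (Measure.restrict_mono hsub le_rfl) ?_
          (integrable_f ρ hmom x t).abs.restrict
        exact Filter.Eventually.of_forall fun η => abs_nonneg _
      calc |∫ η in s, (η - t * mtilde ρ η - x) ∂ρ| ≤ _ := h1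
        _ ≤ _ := h2
        _ < ε := hk₀
    rcases SBar_val ρ hmom x t hy.1 with hcase | hcase
    · have := habs_int (Iio y) measurableSet_Iio (fun η hη => lt_trans hη hyY)
      rw [← Fbar, ← hcase] at this
      rw [abs_lt] at this
      linarith [this.1]
    · have := habs_int (Iic y) measurableSet_Iic (fun η hη => lt_of_le_of_lt hη hyY)
      rw [← FbarP, ← hcase] at this
      rw [abs_lt] at this
      linarith [this.1]

lemma ybar_dichotomy (hmom : Integrable (fun η : ℝ => η) ρ) (x t : ℝ) (ht : 0 < t)
    (hne : (SBar ρ x t ∩ msupp ρ).Nonempty) :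
    nuBar ρ x t = Fbar ρ (ybarStar ρ x t) x t ∨
      nuBar ρ x t = FbarP ρ (ybarStar ρ x t) x t := by
  have hbdd := bddBelow_T ρ hmom x t ht
  have hclos : ybarStar ρ x t ∈ closure (SBar ρ x t ∩ msupp ρ) :=
    csInf_mem_closure hne hbdd
  have hmem : ybarStar ρ x t ∈ SBar ρ x t :=
    closure_SBar_subset ρ x t (closure_mono inter_subset_left hclos)
  exact SBar_val ρ hmom x t hmem

lemma support_ineq (hmom : Integrable (fun η : ℝ => η) ρ) (x t : ℝ) (ht : 0 < t)
    (hne : (SBar ρ x t ∩ msupp ρ).Nonempty) (x' t' : ℝ) :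
    nuBar ρ x' t' ≤ nuBar ρ x t - (x' - x) * mBar ρ x t + (t' - t) * qBar ρ x t := by
  set ybb := ybarStar ρ x t with hybb
  by_cases hc : nuBar ρ x t = Fbar ρ ybb x t
  · rw [mBar, if_pos hc, qBar, if_pos hc]
    have key : Fbar ρ ybb x' t' = Fbar ρ ybb x t - (x' - x) * m0 ρ ybb
        - (t' - t) * (∫ η in Iio ybb, mtilde ρ η ∂ρ) := by
      rw [Fbar_eq ρ hmom ybb x t, Fbar_eq ρ hmom ybb x' t']; ring
    calc nuBar ρ x' t' ≤ Fbar ρ ybb x' t' := nuBar_le ρ hmom x' t' ybb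
      _ = Fbar ρ ybb x t - (x' - x) * m0 ρ ybb
          - (t' - t) * (∫ η in Iio ybb, mtilde ρ η ∂ρ) := key
      _ = nuBar ρ x t - (x' - x) * m0 ρ ybb
          + (t' - t) * -(∫ η in Iio ybb, mtilde ρ η ∂ρ) := by rw [← hc]; ring
  · have hcb : nuBar ρ x t = FbarP ρ ybb x t :=
      (ybar_dichotomy ρ hmom x t ht hne).resolve_left hc
    rw [mBar, if_neg hc, qBar, if_neg hc]
    have key : FbarP ρ ybb x' t' = FbarP ρ ybb x t - (x' - x) * m0p ρ ybb
        - (t' - t) * (∫ η in Iic ybb, mtilde ρ η ∂ρ) := by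
      rw [FbarP_eq ρ hmom ybb x t, FbarP_eq ρ hmom ybb x' t']; ring
    calc nuBar ρ x' t' ≤ FbarP ρ ybb x' t' := nuBar_le_FbarP ρ hmom x' t' ybb
      _ = FbarP ρ ybb x t - (x' - x) * m0p ρ ybb
          - (t' - t) * (∫ η in Iic ybb, mtilde ρ η ∂ρ) := key
      _ = nuBar ρ x t - (x' - x) * m0p ρ ybb
          + (t' - t) * -(∫ η in Iic ybb, mtilde ρ η ∂ρ) := by rw [← hcb]; ring

lemma mBar_bounds (x t : ℝ) : 0 ≤ mBar ρ x t ∧ mBar ρ x t ≤ Mtot ρ := by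
  rw [mBar]
  split
  · exact ⟨m0_nonneg ρ _, m0_le_Mtot ρ _⟩
  · exact ⟨m0p_nonneg ρ _, m0p_le_Mtot ρ _⟩

end SMach

theorem stmt16 (ρ : Measure ℝ) [IsFiniteMeasure ρ] (hρ : ρ ≠ 0)
    (hmom : Integrable (fun η : ℝ => η) ρ)
    (hne : ∀ x t : ℝ, 0 < t → (SBar ρ x t ∩ msupp ρ).Nonempty) :
    (∀ t : ℝ, 0 < t →
      (∀ x₁ x₂ : ℝ, |nuBar ρ x₁ t - nuBar ρ x₂ t| ≤ Mtot ρ * |x₁ - x₂|) ∧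
      (∀ x₁ x₂ : ℝ, x₁ ≤ x₂ →
        (∫ x in x₁..x₂, mBar ρ x t) = nuBar ρ x₁ t - nuBar ρ x₂ t)) ∧
    (∀ x t₁ t₂ : ℝ, 0 < t₁ → t₁ ≤ t₂ →
      (∫ t in t₁..t₂, qBar ρ x t) = nuBar ρ x t₂ - nuBar ρ x t₁) := by
  have hsup : ∀ x t : ℝ, 0 < t → ∀ x' t' : ℝ,
      nuBar ρ x' t' ≤ nuBar ρ x t - (x' - x) * mBar ρ x t + (t' - t) * qBar ρ x t :=
    fun x t ht x' t' => support_ineq ρ hmom x t ht (hne x t ht) x' t'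
  constructor
  · intro t ht
    constructor
    · intro x₁ x₂
      have h1 := hsup x₁ t ht x₂ t
      have h2 := hsup x₂ t ht x₁ t
      simp only [sub_self, zero_mul, add_zero] at h1 h2
      have hb1 := mBar_bounds ρ x₁ t
      have hb2 := mBar_bounds ρ x₂ t
      rw [abs_le]
      rcases le_total x₁ x₂ with hle | hle
      · rw [abs_of_nonpos (by linarith : x₁ - x₂ ≤ 0)]
        constructor
        · nlinarith [h1, hb1.1, hb1.2,
            mul_nonneg (by linarith : (0:ℝ) ≤ x₂ - x₁)
              (by linarith [hb1.2] : (0:ℝ) ≤ Mtot ρ - mBar ρ x₁ t),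
            mul_nonneg (by linarith : (0:ℝ) ≤ x₂ - x₁) hb1.1]
        · nlinarith [h2, hb2.1, hb2.2,
            mul_nonneg (by linarith : (0:ℝ) ≤ x₂ - x₁)
              (by linarith [hb2.2] : (0:ℝ) ≤ Mtot ρ - mBar ρ x₂ t),
            mul_nonneg (by linarith : (0:ℝ) ≤ x₂ - x₁) hb2.1]
      · rw [abs_of_nonneg (by linarith : 0 ≤ x₁ - x₂)]
        constructor
        · nlinarith [h1, hb1.1, hb1.2,
            mul_nonneg (by linarith : (0:ℝ) ≤ x₁ - x₂)
              (by linarith [hb1.2] : (0:ℝ) ≤ Mtot ρ - mBar ρ x₁ t),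
            mul_nonneg (by linarith : (0:ℝ) ≤ x₁ - x₂) hb1.1]
        · nlinarith [h2, hb2.1, hb2.2,
            mul_nonneg (by linarith : (0:ℝ) ≤ x₁ - x₂)
              (by linarith [hb2.2] : (0:ℝ) ≤ Mtot ρ - mBar ρ x₂ t),
            mul_nonneg (by linarith : (0:ℝ) ≤ x₁ - x₂) hb2.1]
    · intro x₁ x₂ hle
      have hfund := lemA (fun x => nuBar ρ x t) (fun x => -mBar ρ x t) x₁ x₂ hle ?_
      · have hneg : (∫ x in x₁..x₂, -mBar ρ x t) = -(∫ x in x₁..x₂, mBar ρ x t) := by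
          simpa using intervalIntegral.integral_neg (f := fun x => mBar ρ x t)
            (a := x₁) (b := x₂) (μ := volume)
        rw [hneg] at hfund
        linarith
      · intro u hu v hv
        have h := hsup u t ht v t
        simp only [sub_self, zero_mul, add_zero] at h
        have e : -mBar ρ u t * (v - u) = -((v - u) * mBar ρ u t) := by ring
        show nuBar ρ v t ≤ nuBar ρ u t + -mBar ρ u t * (v - u)
        rw [e]
        linarith
  · intro x t₁ t₂ ht₁ hle
    refine lemA (fun s => nuBar ρ x s) (fun s => qBar ρ x s) t₁ t₂ hle ?_
    intro u hu v hv
    have hu0 : 0 < u := lt_of_lt_of_le ht₁ hu.1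
    have h := hsup x u hu0 x v
    simp only [sub_self, zero_mul, sub_zero, zero_add] at h
    have e : qBar ρ x u * (v - u) = (v - u) * qBar ρ x u := by ring
    show nuBar ρ x v ≤ nuBar ρ x u + qBar ρ x u * (v - u)
    rw [e]
    linarith
end
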